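/- arXiv:1105.2404 — 5 statements merged into one kernel-verified Lean document; each statement's English description precedes it below -/
import Mathlib

section
/- Let F be a graph with a cut-vertex v such that G^1, G^2, ..., G^m are all the v-components of F − v. If k is an integer with 2 ≤ k < min{δ(G^i) : 1 ≤ i ≤ m}, then Σ_{1≤i≤m} γ_{×k,t}(G^i_I) − m(k+1) + k ≤ γ_{×k,t}(F_I) ≤ Σ_{1≤i≤m} γ_{×k,t}(G^i_I). -/
open SimpleGraph

/-- The inflated graph `G_I` of a graph `G`: its vertices are the darts (oriented edges) of
`G`; the darts with first coordinate `x` form the clique `X_x` (of size `deg x`), and each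
edge `xy` of `G` gives the "blue" edge between the dart `(x,y)` and its reverse `(y,x)`;
these blue edges form a perfect matching.  Equivalently, `inflation G` is the line graph of
the subdivision of `G`. -/
def inflation {V : Type*} (G : SimpleGraph V) : SimpleGraph G.Dart :=
  SimpleGraph.fromRel (fun d₁ d₂ => d₁.toProd.1 = d₂.toProd.1 ∨ d₁.toProd = d₂.toProd.swap)

/-- `S` is a `k`-tuple total dominating set of `H`: every vertex has at least `k`
neighbours in `S`. -/
def IsKTDS {W : Type*} (H : SimpleGraph W) (k : ℕ) (S : Set W) : Prop :=
  ∀ v : W, k ≤ (S ∩ H.neighborSet v).ncard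

/-- The `k`-tuple total domination number of `H`: the minimum cardinality of a `k`-tuple
total dominating set. -/
noncomputable def ktdn {W : Type*} (H : SimpleGraph W) (k : ℕ) : ℕ :=
  sInf {n | ∃ S : Set W, IsKTDS H k S ∧ S.ncard = n}

/-- `H` is a 2-factor of `G`: a spanning 2-regular subgraph of `G`, i.e. a vertex-disjoint
union of cycles covering all vertices. -/
def IsTwoFactor {V : Type*} (G H : SimpleGraph V) : Prop :=
  H ≤ G ∧ ∀ v : V, (H.neighborSet v).ncard = 2

/-- `G` is a `k`-Hamiltonian-like decomposable graph (kHLD-graph): `G` contains `k`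
pairwise edge-disjoint 2-factors. -/
def IsKHLD {V : Type*} (G : SimpleGraph V) (k : ℕ) : Prop :=
  ∃ F : Fin k → SimpleGraph V, (∀ i, IsTwoFactor G (F i)) ∧
    ∀ i j, i ≠ j → Disjoint (F i) (F j)

/-- `M` is a perfect matching of `G`, viewed as a 1-regular spanning subgraph. -/
def IsPerfectMatchingGraph {V : Type*} (G M : SimpleGraph V) : Prop :=
  M ≤ G ∧ ∀ v : V, (M.neighborSet v).ncard = 1

/-- `M` is a matching of `G`: a subgraph of maximum degree at most 1. -/
def IsMatchingGraph {V : Type*} (G M : SimpleGraph V) : Prop :=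
  M ≤ G ∧ ∀ v : V, (M.neighborSet v).ncard ≤ 1

/-- `G` is a kHLPM-graph: `G` contains `k` pairwise edge-disjoint 2-factors together with
a perfect matching edge-disjoint from each of these 2-factors. -/
def IsKHLPM {V : Type*} (G : SimpleGraph V) (k : ℕ) : Prop :=
  ∃ (F : Fin k → SimpleGraph V) (M : SimpleGraph V),
    (∀ i, IsTwoFactor G (F i)) ∧ (∀ i j, i ≠ j → Disjoint (F i) (F j)) ∧
    IsPerfectMatchingGraph G M ∧ ∀ i, Disjoint M (F i)

/-- `G` is a kHLMM-graph: `G` contains `k` pairwise edge-disjoint 2-factors together with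
a matching of size `⌊n/2⌋` edge-disjoint from each of these 2-factors. -/
def IsKHLMM {V : Type*} [Fintype V] (G : SimpleGraph V) (k : ℕ) : Prop :=
  ∃ (F : Fin k → SimpleGraph V) (M : SimpleGraph V),
    (∀ i, IsTwoFactor G (F i)) ∧ (∀ i j, i ≠ j → Disjoint (F i) (F j)) ∧
    IsMatchingGraph G M ∧ M.edgeSet.ncard = Fintype.card V / 2 ∧ ∀ i, Disjoint M (F i)

/-- The graph `F` on `V ⊕ W` obtained from the disjoint union of `G` (on `V`) and `H`
(on `W`) by adding the single edge between `x : V` and `y : W`.  When `G` and `H` are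
connected, this added edge is a cut-edge of `F` whose removal leaves exactly the two
components `G` and `H`. -/
def joinByEdge {V W : Type*} (G : SimpleGraph V) (H : SimpleGraph W) (x : V) (y : W) :
    SimpleGraph (V ⊕ W) :=
  SimpleGraph.fromRel (fun a b =>
    match a, b with
    | Sum.inl u, Sum.inl v => G.Adj u v
    | Sum.inr u, Sum.inr v => H.Adj u v
    | Sum.inl u, Sum.inr v => u = x ∧ v = y
    | Sum.inr _, Sum.inl _ => False)

/-- The generalized Petersen graph `P(n,m)`: vertices `a_i` (the left copies) and `b_i`
(the right copies) for `i ∈ ZMod n`, with edges `a_i a_{i+1}`, `a_i b_i`, `b_i b_{i+m}`. -/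
def genPetersen (n m : ℕ) : SimpleGraph (ZMod n ⊕ ZMod n) :=
  SimpleGraph.fromRel (fun a b =>
    match a, b with
    | Sum.inl i, Sum.inl j => j = i + 1
    | Sum.inl i, Sum.inr j => j = i
    | Sum.inr i, Sum.inr j => j = i + (m : ZMod n)
    | Sum.inr _, Sum.inl _ => False)

/-- Cyclic distance between `i` and `j` on the cycle `ZMod n`. -/
def cycDist (n : ℕ) (i j : ZMod n) : ℕ := min (i - j).val (j - i).val

/-- The Harary graph `H_{m,n}` on `ZMod n`: each vertex is adjacent to the nearest `m/2`
vertices in each direction around the circle; if `m` is odd and `n` is even, each vertex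
is also adjacent to the diametrically opposite vertex; if `m` and `n` are both odd, the
edges `(i, i + (n-1)/2)` for `0 ≤ i ≤ (n-1)/2` are added instead. -/
def harary (m n : ℕ) : SimpleGraph (ZMod n) :=
  SimpleGraph.fromRel (fun i j =>
    (1 ≤ cycDist n i j ∧ cycDist n i j ≤ m / 2) ∨
    (m % 2 = 1 ∧ n % 2 = 0 ∧ j = i + ((n / 2 : ℕ) : ZMod n)) ∨
    (m % 2 = 1 ∧ n % 2 = 1 ∧ (∃ t : ℕ, t ≤ (n - 1) / 2 ∧ i = (t : ZMod n)) ∧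
      j = i + (((n - 1) / 2 : ℕ) : ZMod n)))

/-- The graph obtained by gluing the graphs `G i` (on vertex types `V i`) at the
distinguished vertices `x i`, which are all identified to the single vertex `none`.
The `v`-components of the resulting graph at the cut-vertex `v = none` are exactly
(canonical copies of) the graphs `G i`. -/
def wedgeAt {m : ℕ} {V : Fin m → Type*} (G : ∀ i, SimpleGraph (V i)) (x : ∀ i, V i) :
    SimpleGraph (Option (Σ i : Fin m, {u : V i // u ≠ x i})) :=
  SimpleGraph.fromRel (fun a b =>
    match a, b with
    | none, some ⟨i, u⟩ => (G i).Adj (x i) u.val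
    | some ⟨i, u⟩, some ⟨j, w⟩ => ∃ h : i = j, (G j).Adj (cast (congrArg V h) u.val) w.val
    | _, _ => False)

/-!
The darts of the wedge are the disjoint union of the darts of the `G i`, and in an inflation a
dart sees exactly the other darts of its clique and its reverse; so gluing only merges the
cliques of the `x i` into the clique of the cut-vertex.

Upper bound: the union of minimum sets for the `G i` dominates the inflated wedge.

Lower bound: a minimum set `S` for the inflated wedge restricts to sets `S_i` that dominate
`k`-tuply every dart of `G i` outside the clique of `x i`. Topping up `S_i` to `k + 1` darts
on that clique costs at most `k + 1 - min (k + 1) s_i` darts, where `s_i` is the size of its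
trace there. A dart of the cut-vertex clique has a single neighbour outside that clique, so for
`k ≥ 2` the set `S` contains at least `k` of its darts, whence `∑ min (k + 1) s_i ≥ k`.
-/

open Set

instance SimpleGraph.Dart.finite {W : Type*} [Finite W] (H : SimpleGraph W) : Finite H.Dart :=
  Finite.of_injective _ Dart.toProd_injective

section KTDS

variable {W : Type*} {H : SimpleGraph W} {k : ℕ} {S : Set W}

lemma ktdn_le_ncard (hS : IsKTDS H k S) : ktdn H k ≤ S.ncard :=
  Nat.sInf_le ⟨S, hS, rfl⟩

lemma IsKTDS.exists_ncard_eq_ktdn (hS : IsKTDS H k S) :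
    ∃ S', IsKTDS H k S' ∧ S'.ncard = ktdn H k :=
  Nat.sInf_mem (s := {n | ∃ S, IsKTDS H k S ∧ S.ncard = n}) ⟨S.ncard, S, hS, rfl⟩

end KTDS

section Inflation

variable {W : Type*} {H : SimpleGraph W}

lemma neighborSet_inflation (d : H.Dart) :
    (inflation H).neighborSet d = insert d.symm ({e | e.fst = d.fst} \ {d}) := by
  ext e
  rw [mem_neighborSet, inflation, fromRel_adj]
  simp only [mem_insert_iff, mem_sdiff, mem_ofPred_eq, mem_singleton_iff]
  constructor
  · rintro ⟨hne, (h | h) | (h | h)⟩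
    · exact Or.inr ⟨h.symm, Ne.symm hne⟩
    · exact Or.inl (Dart.ext _ _ (by simp [h]))
    · exact Or.inr ⟨h, Ne.symm hne⟩
    · exact Or.inl (Dart.ext _ _ h)
  · rintro (rfl | ⟨h, hne⟩)
    · exact ⟨d.symm_ne.symm, Or.inr (Or.inr rfl)⟩
    · exact ⟨Ne.symm hne, Or.inl (Or.inl h.symm)⟩

lemma ncard_fiber_eq_degree [Fintype W] [DecidableRel H.Adj] (u : W) :
    {d : H.Dart | d.fst = u}.ncard = H.degree u := by
  classical
  rw [← dart_fst_fiber_card_eq_degree, ← Set.ncard_coe_finset]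
  simp

variable [Finite W] {k : ℕ}

lemma le_ncard_sdiff_fiber_add_one {S : Set H.Dart} (hS : IsKTDS (inflation H) k S)
    (d : H.Dart) : k ≤ ((S ∩ {e | e.fst = d.fst}) \ {d}).ncard + 1 := by
  calc k ≤ (S ∩ (inflation H).neighborSet d).ncard := hS d
    _ ≤ (insert d.symm ((S ∩ {e | e.fst = d.fst}) \ {d})).ncard := by
        refine ncard_le_ncard (fun e ⟨heS, he⟩ => ?_) (toFinite _)
        rw [neighborSet_inflation] at he
        rcases he with rfl | ⟨he, hne⟩
        exacts [mem_insert _ _, mem_insert_of_mem _ ⟨⟨heS, he⟩, hne⟩]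
    _ ≤ _ := ncard_insert_le _ _

lemma IsKTDS.le_ncard_inter_fiber (hk : 2 ≤ k) {S : Set H.Dart}
    (hS : IsKTDS (inflation H) k S) (d₀ : H.Dart) :
    k ≤ (S ∩ {e | e.fst = d₀.fst}).ncard := by
  rcases (S ∩ {e | e.fst = d₀.fst}).eq_empty_or_nonempty with hA | ⟨d, hdA⟩
  · have := le_ncard_sdiff_fiber_add_one hS d₀
    simp only [hA, empty_sdiff, ncard_empty] at this
    omega
  · have := le_ncard_sdiff_fiber_add_one hS d
    have hd : d.fst = d₀.fst := hdA.2
    rw [hd, ncard_sdiff_singleton_of_mem hdA] at this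
    have := (ncard_pos (toFinite _)).mpr ⟨d, hdA⟩
    omega

lemma isKTDS_union_of_subset_fiber {u : W} {S T : Set H.Dart}
    (hS : ∀ d : H.Dart, d.fst ≠ u → k ≤ (S ∩ (inflation H).neighborSet d).ncard)
    (hT : T ⊆ {d | d.fst = u}) (hTk : k + 1 ≤ T.ncard) :
    IsKTDS (inflation H) k (S ∪ T) := by
  intro d
  by_cases hd : d.fst = u
  · calc k ≤ (T \ {d}).ncard := by have := pred_ncard_le_ncard_sdiff_singleton T d; omega
      _ ≤ _ := by
        refine ncard_le_ncard (fun e ⟨heT, hne⟩ => ⟨Or.inr heT, ?_⟩) (toFinite _)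
        rw [neighborSet_inflation]
        exact mem_insert_of_mem _ ⟨(hT heT).trans hd.symm, hne⟩
  · exact (hS d hd).trans
      (ncard_le_ncard (inter_subset_inter_left _ subset_union_left) (toFinite _))

end Inflation

section InflationDegree

variable {W : Type*} [Fintype W] {H : SimpleGraph W} [DecidableRel H.Adj] {k : ℕ}

lemma isKTDS_inflation_univ (hk : k < H.minDegree) : IsKTDS (inflation H) k univ := by
  intro d
  calc k ≤ {e : H.Dart | e.fst = d.fst}.ncard - 1 := by
        rw [ncard_fiber_eq_degree]
        have := H.minDegree_le_degree d.fst
        omega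
    _ ≤ ({e : H.Dart | e.fst = d.fst} \ {d}).ncard := pred_ncard_le_ncard_sdiff_singleton _ _
    _ ≤ _ := by
        rw [univ_inter, neighborSet_inflation]
        exact ncard_le_ncard (subset_insert _ _) (toFinite _)

lemma ktdn_inflation_add_min_le {u : W} (hu : k < H.degree u) {S : Set H.Dart}
    (hS : ∀ d : H.Dart, d.fst ≠ u → k ≤ (S ∩ (inflation H).neighborSet d).ncard) :
    ktdn (inflation H) k + min (k + 1) (S ∩ {d | d.fst = u}).ncard ≤ S.ncard + (k + 1) := by
  set A := S ∩ {d : H.Dart | d.fst = u}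
  obtain ⟨T, hAT, hTu, hTcard⟩ :
      ∃ T, A ⊆ T ∧ T ⊆ {d | d.fst = u} ∧ T.ncard = max (k + 1) A.ncard :=
    exists_subsuperset_card_eq inter_subset_right (le_max_right _ _)
    (max_le (by rw [ncard_fiber_eq_degree]; omega) (ncard_le_ncard inter_subset_right))
  have hST : S ∪ T ⊆ S ∪ (T \ A) := fun e he => by
    by_cases heS : e ∈ S
    · exact Or.inl heS
    · exact Or.inr ⟨he.resolve_left heS, fun heA => heS heA.1⟩
  have := (ktdn_le_ncard (isKTDS_union_of_subset_fiber hS hTu (hTcard ▸ le_max_left _ _))).trans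
    ((ncard_le_ncard hST).trans (ncard_union_le _ _))
  rw [ncard_sdiff hAT, hTcard] at this
  omega

end InflationDegree

section Wedge

variable {m : ℕ} {V : Fin m → Type*} (G : ∀ i, SimpleGraph (V i)) (x : ∀ i, V i)

open Classical in
noncomputable def wedgeIncl (i : Fin m) (u : V i) :
    Option (Σ i : Fin m, {u : V i // u ≠ x i}) :=
  if h : u = x i then none else some ⟨i, u, h⟩

variable {x}

lemma wedgeIncl_self (i : Fin m) : wedgeIncl x i (x i) = none := dif_pos rfl

lemma wedgeIncl_of_ne {i : Fin m} {u : V i} (h : u ≠ x i) :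
    wedgeIncl x i u = some ⟨i, u, h⟩ := dif_neg h

lemma wedgeIncl_eq_none_iff {i : Fin m} {u : V i} : wedgeIncl x i u = none ↔ u = x i := by
  unfold wedgeIncl
  split_ifs with h <;> simp [h]

lemma wedgeIncl_eq_wedgeIncl {i j : Fin m} {a : V i} {b : V j}
    (h : wedgeIncl x i a = wedgeIncl x j b) :
    (a = x i ∧ b = x j) ∨ (⟨i, a⟩ : Σ i, V i) = ⟨j, b⟩ := by
  by_cases ha : a = x i <;> by_cases hb : b = x j
  · exact Or.inl ⟨ha, hb⟩
  · simp [ha, wedgeIncl_self, wedgeIncl_of_ne hb] at h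
  · simp [hb, wedgeIncl_self, wedgeIncl_of_ne ha] at h
  · rw [wedgeIncl_of_ne ha, wedgeIncl_of_ne hb, Option.some_inj] at h
    obtain ⟨rfl, h⟩ := Sigma.mk.inj_iff.mp h
    exact Or.inr (congrArg (Sigma.mk i) (congrArg Subtype.val (eq_of_heq h)))

lemma wedgeIncl_injective (i : Fin m) : Function.Injective (wedgeIncl x i) := fun a b h => by
  rcases wedgeIncl_eq_wedgeIncl h with ⟨rfl, rfl⟩ | h
  exacts [rfl, sigma_mk_injective h]

variable {G}

lemma wedgeAt_adj_wedgeIncl {i : Fin m} {a b : V i} (h : (G i).Adj a b) :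
    (wedgeAt G x).Adj (wedgeIncl x i a) (wedgeIncl x i b) := by
  rw [wedgeAt, fromRel_adj]
  refine ⟨fun he => h.ne (wedgeIncl_injective i he), ?_⟩
  by_cases ha : a = x i
  · subst ha
    rw [wedgeIncl_self, wedgeIncl_of_ne h.ne.symm]
    exact Or.inl h
  · by_cases hb : b = x i
    · subst hb
      rw [wedgeIncl_self, wedgeIncl_of_ne ha]
      exact Or.inr h.symm
    · rw [wedgeIncl_of_ne ha, wedgeIncl_of_ne hb]
      exact Or.inl ⟨rfl, h⟩

variable (G x)

noncomputable def wedgeDart (i : Fin m) (d : (G i).Dart) : (wedgeAt G x).Dart :=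
  ⟨(wedgeIncl x i d.fst, wedgeIncl x i d.snd), wedgeAt_adj_wedgeIncl d.adj⟩

variable {G x}

lemma wedgeDart_fst (i : Fin m) (d : (G i).Dart) :
    (wedgeDart G x i d).fst = wedgeIncl x i d.fst := rfl

lemma wedgeDart_symm (i : Fin m) (d : (G i).Dart) :
    wedgeDart G x i d.symm = (wedgeDart G x i d).symm := rfl

lemma wedgeDart_injective (i : Fin m) : Function.Injective (wedgeDart G x i) := fun d e h => by
  rw [wedgeDart, wedgeDart, Dart.mk.injEq, Prod.mk.injEq] at h
  exact Dart.ext _ _ (Prod.ext (wedgeIncl_injective i h.1) (wedgeIncl_injective i h.2))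

lemma eq_of_wedgeDart_eq {i j : Fin m} {d : (G i).Dart} {e : (G j).Dart}
    (h : wedgeDart G x i d = wedgeDart G x j e) : i = j := by
  rw [wedgeDart, wedgeDart, Dart.mk.injEq, Prod.mk.injEq] at h
  rcases wedgeIncl_eq_wedgeIncl h.1 with ⟨hd, -⟩ | h₁
  · rcases wedgeIncl_eq_wedgeIncl h.2 with ⟨hd', -⟩ | h₂
    · exact absurd (hd.trans hd'.symm) d.fst_ne_snd
    · exact congrArg Sigma.fst h₂
  · exact congrArg Sigma.fst h₁

lemma exists_wedgeDart_eq (w : (wedgeAt G x).Dart) : ∃ i d, wedgeDart G x i d = w := by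
  obtain ⟨⟨a, b⟩, hab⟩ := w
  rw [wedgeAt, fromRel_adj] at hab
  obtain ⟨hne, hab⟩ := hab
  rcases a with _ | ⟨i, u, hu⟩ <;> rcases b with _ | ⟨j, v, hv⟩
  · exact absurd rfl hne
  · refine ⟨j, ⟨(x j, v), hab.resolve_right id⟩, ?_⟩
    simp [wedgeDart, wedgeIncl_self, wedgeIncl_of_ne hv]
  · refine ⟨i, ⟨(u, x i), (hab.resolve_left id).symm⟩, ?_⟩
    simp [wedgeDart, wedgeIncl_self, wedgeIncl_of_ne hu]
  · rcases hab with ⟨rfl, hadj⟩ | ⟨rfl, hadj⟩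
    · exact ⟨_, ⟨(u, v), hadj⟩, by simp [wedgeDart, wedgeIncl_of_ne, hu, hv]⟩
    · exact ⟨_, ⟨(u, v), hadj.symm⟩, by simp [wedgeDart, wedgeIncl_of_ne, hu, hv]⟩

lemma wedgeDart_mem_neighborSet_inflation {i : Fin m} {d e : (G i).Dart}
    (h : e ∈ (inflation (G i)).neighborSet d) :
    wedgeDart G x i e ∈ (inflation (wedgeAt G x)).neighborSet (wedgeDart G x i d) := by
  rw [neighborSet_inflation] at h ⊢
  rcases h with rfl | ⟨he, hne⟩
  · exact Or.inl (wedgeDart_symm i d)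
  · exact Or.inr ⟨congrArg (wedgeIncl x i) he, (wedgeDart_injective i).ne hne⟩

lemma neighborSet_inflation_wedgeDart_subset {i : Fin m} {d : (G i).Dart} (hd : d.fst ≠ x i) :
    (inflation (wedgeAt G x)).neighborSet (wedgeDart G x i d)
      ⊆ wedgeDart G x i '' (inflation (G i)).neighborSet d := by
  intro w hw
  obtain ⟨j, e, rfl⟩ := exists_wedgeDart_eq w
  rw [neighborSet_inflation] at hw
  rcases hw with h | ⟨he, hne⟩
  · rw [← wedgeDart_symm] at h
    obtain rfl := eq_of_wedgeDart_eq h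
    exact ⟨d.symm, by simp [neighborSet_inflation], h.symm⟩
  · rcases wedgeIncl_eq_wedgeIncl he with ⟨-, hd'⟩ | h
    · exact absurd hd' hd
    · obtain ⟨rfl, he⟩ := Sigma.mk.inj_iff.mp h
      refine ⟨e, ?_, rfl⟩
      rw [neighborSet_inflation]
      exact Or.inr ⟨eq_of_heq he, fun h => hne (congrArg _ h)⟩

lemma wedgeDart_preimage_fiber_none (i : Fin m) :
    wedgeDart G x i ⁻¹' {w | w.fst = none} = {d | d.fst = x i} := by
  ext d
  exact wedgeIncl_eq_none_iff

lemma wedgeDart_preimage_iUnion_image (S : ∀ i, Set (G i).Dart) (i : Fin m) :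
    wedgeDart G x i ⁻¹' ⋃ j, wedgeDart G x j '' S j = S i := by
  ext d
  simp only [mem_preimage, mem_iUnion, mem_image]
  refine ⟨fun ⟨j, e, he, h⟩ => ?_, fun h => ⟨i, d, h, rfl⟩⟩
  obtain rfl := eq_of_wedgeDart_eq h
  exact wedgeDart_injective _ h ▸ he

variable [∀ i, Finite (V i)] {k : ℕ}

lemma ncard_eq_sum_ncard_preimage_wedgeDart (A : Set (wedgeAt G x).Dart) :
    A.ncard = ∑ i, (wedgeDart G x i ⁻¹' A).ncard := by
  set B : Fin m → Set (wedgeAt G x).Dart := fun i => wedgeDart G x i '' (wedgeDart G x i ⁻¹' A)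
  have hA : A = ⋃ i, B i := by
    ext w
    obtain ⟨i, d, rfl⟩ := exists_wedgeDart_eq w
    simp only [B, mem_iUnion, mem_image, mem_preimage]
    exact ⟨fun h => ⟨i, d, h, rfl⟩, fun ⟨j, e, he, h⟩ => h ▸ he⟩
  have hB : Pairwise fun i j => Disjoint (B i) (B j) :=
    fun i j hij => Set.disjoint_left.mpr fun _ ⟨_, _, hd⟩ ⟨_, _, he⟩ =>
      hij (eq_of_wedgeDart_eq (hd.trans he.symm))
  conv_lhs => rw [hA]
  rw [ncard_iUnion_of_finite (fun _ => toFinite _) hB, finsum_eq_sum_of_fintype]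
  exact Finset.sum_congr rfl fun i _ => ncard_image_of_injective _ (wedgeDart_injective i)

lemma isKTDS_iUnion_image_wedgeDart {S : ∀ i, Set (G i).Dart}
    (hS : ∀ i, IsKTDS (inflation (G i)) k (S i)) :
    IsKTDS (inflation (wedgeAt G x)) k (⋃ i, wedgeDart G x i '' S i) := by
  intro w
  obtain ⟨i, d, rfl⟩ := exists_wedgeDart_eq w
  calc k ≤ (S i ∩ (inflation (G i)).neighborSet d).ncard := hS i d
    _ = (wedgeDart G x i '' (S i ∩ (inflation (G i)).neighborSet d)).ncard :=
        (ncard_image_of_injective _ (wedgeDart_injective i)).symm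
    _ ≤ _ := by
        refine ncard_le_ncard ?_ (toFinite _)
        rintro _ ⟨e, ⟨he, hde⟩, rfl⟩
        exact ⟨mem_iUnion.mpr ⟨i, mem_image_of_mem _ he⟩,
          wedgeDart_mem_neighborSet_inflation hde⟩

lemma IsKTDS.le_ncard_preimage_wedgeDart_inter {S : Set (wedgeAt G x).Dart}
    (hS : IsKTDS (inflation (wedgeAt G x)) k S) (i : Fin m) (d : (G i).Dart) (hd : d.fst ≠ x i) :
    k ≤ (wedgeDart G x i ⁻¹' S ∩ (inflation (G i)).neighborSet d).ncard :=
  calc k ≤ (S ∩ (inflation (wedgeAt G x)).neighborSet (wedgeDart G x i d)).ncard := hS _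
    _ ≤ (wedgeDart G x i ''
          (wedgeDart G x i ⁻¹' S ∩ (inflation (G i)).neighborSet d)).ncard := by
        refine ncard_le_ncard (fun w ⟨hwS, hw⟩ => ?_) (toFinite _)
        obtain ⟨e, he, rfl⟩ := neighborSet_inflation_wedgeDart_subset hd hw
        exact ⟨e, ⟨hwS, he⟩, rfl⟩
    _ = _ := ncard_image_of_injective _ (wedgeDart_injective i)

end Wedge

lemma le_sum_min_of_le_sum {ι : Type*} {s : Finset ι} {f : ι → ℕ} {c d : ℕ} (hcd : c ≤ d)
    (h : c ≤ ∑ i ∈ s, f i) : c ≤ ∑ i ∈ s, min d (f i) := by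
  by_cases hf : ∃ i ∈ s, d ≤ f i
  · obtain ⟨i, hi, hdi⟩ := hf
    calc c ≤ min d (f i) := by rwa [min_eq_left hdi]
      _ ≤ _ := Finset.single_le_sum (f := fun i => min d (f i)) (fun _ _ => Nat.zero_le _) hi
  · push Not at hf
    rwa [Finset.sum_congr rfl fun i hi => min_eq_right (hf i hi).le]

section WedgeBounds

variable {m : ℕ} {V : Fin m → Type*} [∀ i, Fintype (V i)] {G : ∀ i, SimpleGraph (V i)}
  [∀ i, DecidableRel (G i).Adj] {x : ∀ i, V i} {k : ℕ}

lemma ktdn_inflation_wedgeAt_le_sum (hδ : ∀ i, k < (G i).minDegree) :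
    ktdn (inflation (wedgeAt G x)) k ≤ ∑ i, ktdn (inflation (G i)) k := by
  choose S hS hScard using fun i => (isKTDS_inflation_univ (hδ i)).exists_ncard_eq_ktdn
  refine (ktdn_le_ncard (isKTDS_iUnion_image_wedgeDart (x := x) hS)).trans_eq ?_
  rw [ncard_eq_sum_ncard_preimage_wedgeDart]
  exact Finset.sum_congr rfl fun i _ => by rw [wedgeDart_preimage_iUnion_image, hScard]

lemma sum_ktdn_inflation_add_le_ktdn_inflation_wedgeAt (hm : 0 < m) (hk : 2 ≤ k)
    (hδ : ∀ i, k < (G i).minDegree) :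
    ∑ i, ktdn (inflation (G i)) k + k ≤ ktdn (inflation (wedgeAt G x)) k + m * (k + 1) := by
  have hdeg (i : Fin m) : k < (G i).degree (x i) :=
    (hδ i).trans_le ((G i).minDegree_le_degree _)
  obtain ⟨S, hS, hScard⟩ := IsKTDS.exists_ncard_eq_ktdn
    (isKTDS_iUnion_image_wedgeDart (x := x) fun i => isKTDS_inflation_univ (hδ i))
  have hcut : k ≤ ∑ i, (wedgeDart G x i ⁻¹' S ∩ {d | d.fst = x i}).ncard := by
    let i₀ : Fin m := ⟨0, hm⟩
    obtain ⟨y, hy⟩ :=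
      ((G i₀).degree_pos_iff_exists_adj (x i₀)).mp (Nat.zero_lt_of_lt (hdeg i₀))
    have := hS.le_ncard_inter_fiber hk (wedgeDart G x i₀ ⟨(x i₀, y), hy⟩)
    rw [wedgeDart_fst, wedgeIncl_self, ncard_eq_sum_ncard_preimage_wedgeDart] at this
    simpa only [preimage_inter, wedgeDart_preimage_fiber_none] using this
  calc ∑ i, ktdn (inflation (G i)) k + k
      ≤ ∑ i, (ktdn (inflation (G i)) k
          + min (k + 1) (wedgeDart G x i ⁻¹' S ∩ {d | d.fst = x i}).ncard) := by
        rw [Finset.sum_add_distrib]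
        exact Nat.add_le_add_left (le_sum_min_of_le_sum k.le_succ hcut) _
    _ ≤ ∑ i, ((wedgeDart G x i ⁻¹' S).ncard + (k + 1)) := Finset.sum_le_sum fun i _ =>
        ktdn_inflation_add_min_le (hdeg i) (hS.le_ncard_preimage_wedgeDart_inter i)
    _ = ktdn (inflation (wedgeAt G x)) k + m * (k + 1) := by
        rw [Finset.sum_add_distrib, ← ncard_eq_sum_ncard_preimage_wedgeDart, hScard]
        simp

end WedgeBounds

theorem stmt13_general (m : ℕ) (hm : 2 ≤ m) {V : Fin m → Type*} [∀ i, Fintype (V i)]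
    (G : ∀ i, SimpleGraph (V i)) [∀ i, DecidableRel (G i).Adj] (x : ∀ i, V i)
    (k : ℕ) (hk : 2 ≤ k)
    (hδ : ∀ i, k < (G i).minDegree) :
    (∑ i, ktdn (inflation (G i)) k) + k ≤ ktdn (inflation (wedgeAt G x)) k + m * (k + 1) ∧
      ktdn (inflation (wedgeAt G x)) k ≤ ∑ i, ktdn (inflation (G i)) k :=
  ⟨sum_ktdn_inflation_add_le_ktdn_inflation_wedgeAt (by omega) hk hδ,
    ktdn_inflation_wedgeAt_le_sum hδ⟩

/-- **Theorem (cut-vertex bounds).** Let `F` be a graph with a cut-vertex `v` whose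
`v`-components are `G^1, …, G^m` (here `F = wedgeAt G x` is the graph obtained by gluing
the connected graphs `G i` at the vertices `x i`, identified to the cut-vertex `v`).
If `2 ≤ k < min {δ(G^i)}`, then
`Σ γ_{×k,t}(G^i_I) - m(k+1) + k ≤ γ_{×k,t}(F_I) ≤ Σ γ_{×k,t}(G^i_I)`. -/
theorem stmt13 (m : ℕ) (hm : 2 ≤ m) {V : Fin m → Type*} [∀ i, Fintype (V i)]
    (G : ∀ i, SimpleGraph (V i)) [∀ i, DecidableRel (G i).Adj] (x : ∀ i, V i)
    (hconn : ∀ i, (G i).Connected) (k : ℕ) (hk : 2 ≤ k)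
    (hδ : ∀ i, k < (G i).minDegree) :
    (∑ i, ktdn (inflation (G i)) k) + k ≤ ktdn (inflation (wedgeAt G x)) k + m * (k + 1) ∧
      ktdn (inflation (wedgeAt G x)) k ≤ ∑ i, ktdn (inflation (G i)) k :=
  stmt13_general m hm G x k hk hδ
end

section
/- Let 2 ≤ k ≤ m < n be integers. Then the Harary graph H_{m,n} is a ⌊m/2⌋-Hamiltonian-like decomposable graph, and γ_{×k,t}((H_{m,n})_I) = nk + 1 if k and n are both odd, and γ_{×k,t}((H_{m,n})_I) = nk otherwise. -/
open SimpleGraph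

/-!
A dart `d` of a `k`-tuple total dominating set `S` of the inflation sees only the other darts of
its clique `X_{d.fst}` and its reverse, so `S` meets every clique in at least `k` darts and
`|S| ≥ nk`. If `|S| = nk`, every clique holds exactly `k` darts of `S`, so each dart of `S` needs
its reverse in `S`; then `S` is a union of reverse pairs and `|S|` is even, which is impossible
for `nk` odd. Conversely the darts of a spanning subgraph of minimum degree `k` form a `k`-tuple
total dominating set whose size is its degree sum, and `H_{m,n}` has a spanning subgraph with
all degrees `k`, except one vertex of degree `k + 1` when `k` and `n` are odd: a band of
circulant distances completed by a matching of distance-one steps, by the diameters, or by the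
extra chords of `H_{m,n}`. The circulants of a single distance `d ≤ ⌊m/2⌋` are `⌊m/2⌋`
edge-disjoint 2-factors.
-/

namespace SimpleGraph

variable {V : Type*} {G : SimpleGraph V}

instance [Finite V] : Finite G.Dart := Finite.of_injective _ Dart.toProd_injective

/-- The clique `X_x` of the inflation. -/
def dartsAt (G : SimpleGraph V) (x : V) : Set G.Dart := {d | d.fst = x}

def dartsOf (G H : SimpleGraph V) : Set G.Dart := {d | H.Adj d.fst d.snd}

lemma dartsAt_nonempty {x : V} (hx : (G.neighborSet x).Nonempty) : (G.dartsAt x).Nonempty :=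
  let ⟨y, hy⟩ := hx
  ⟨⟨(x, y), hy⟩, rfl⟩

lemma inflation_neighborSet (d : G.Dart) :
    (inflation G).neighborSet d = G.dartsAt d.fst \ {d} ∪ {d.symm} := by
  have hswap : ∀ a b : G.Dart, a.toProd = b.toProd.swap ↔ b = a.symm := fun a b => by
    rw [Dart.ext_iff, Dart.symm_toProd, ← Prod.swap_inj, Prod.swap_swap, eq_comm]
  ext e
  simp only [mem_neighborSet, inflation, fromRel_adj, dartsAt, hswap, Set.mem_union,
    Set.mem_sdiff, Set.mem_ofPred_eq, Set.mem_singleton_iff]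
  constructor
  · rintro ⟨hne, (h | h) | (h | h)⟩
    · exact Or.inl ⟨h.symm, Ne.symm hne⟩
    · exact Or.inr h
    · exact Or.inl ⟨h, Ne.symm hne⟩
    · exact Or.inr (by rw [h, Dart.symm_symm])
  · rintro (⟨h, hne⟩ | rfl)
    · exact ⟨Ne.symm hne, Or.inr (Or.inl h)⟩
    · exact ⟨d.symm_ne.symm, Or.inl (Or.inr rfl)⟩

lemma ncard_inter_inflation_neighborSet [Finite V] (S : Set G.Dart) (d : G.Dart) :
    (S ∩ (inflation G).neighborSet d).ncard =
      ((S ∩ G.dartsAt d.fst) \ {d}).ncard + (S ∩ {d.symm}).ncard := by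
  rw [inflation_neighborSet, Set.inter_union_distrib_left, ← Set.inter_sdiff_assoc,
    Set.ncard_union_eq (Set.disjoint_right.mpr ?_)]
  rintro e ⟨-, rfl⟩ ⟨⟨-, he⟩, -⟩
  exact d.fst_ne_snd he.symm

lemma le_ncard_inter_dartsAt [Finite V] {k : ℕ} (hk : 2 ≤ k) {S : Set G.Dart}
    (hS : IsKTDS (inflation G) k S) {x : V} (hx : (G.dartsAt x).Nonempty) :
    k ≤ (S ∩ G.dartsAt x).ncard := by
  have hsymm : ∀ d : G.Dart, (S ∩ {d.symm}).ncard ≤ 1 := fun d =>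
    (Set.ncard_le_ncard Set.inter_subset_right).trans (Set.ncard_singleton _).le
  rcases (S ∩ G.dartsAt x).eq_empty_or_nonempty with hT | ⟨d, hdS, rfl⟩
  · obtain ⟨d, rfl⟩ := hx
    have := hS d
    rw [ncard_inter_inflation_neighborSet, hT, Set.empty_sdiff, Set.ncard_empty] at this
    have := hsymm d
    omega
  · have := hS d
    have hmem : d ∈ S ∩ G.dartsAt d.fst := ⟨hdS, rfl⟩
    rw [ncard_inter_inflation_neighborSet, Set.ncard_sdiff_singleton_of_mem hmem] at this
    have := hsymm d
    omega

lemma ncard_eq_sum_ncard_inter_dartsAt [Fintype V] (S : Set G.Dart) :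
    S.ncard = ∑ x : V, (S ∩ G.dartsAt x).ncard := by
  classical
  have := Fintype.ofFinite G.Dart
  rw [Set.ncard_eq_toFinset_card', Finset.card_eq_sum_card_fiberwise
    (f := fun d : G.Dart => d.fst) (t := Finset.univ) fun _ _ => Finset.mem_univ _]
  refine Finset.sum_congr rfl fun x _ => ?_
  rw [← Set.ncard_coe_finset, Finset.coe_filter]
  simp_rw [Set.mem_toFinset]
  rfl

lemma card_mul_le_ncard_of_isKTDS [Fintype V] {k : ℕ} (hk : 2 ≤ k)
    (hG : ∀ x, (G.neighborSet x).Nonempty) {S : Set G.Dart} (hS : IsKTDS (inflation G) k S) :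
    Fintype.card V * k ≤ S.ncard := by
  have hconst : ∑ _x : V, k = Fintype.card V * k := by simp
  rw [ncard_eq_sum_ncard_inter_dartsAt, ← hconst]
  exact Finset.sum_le_sum fun x _ => le_ncard_inter_dartsAt hk hS (dartsAt_nonempty (hG x))

lemma symm_mem_of_isKTDS_of_ncard_eq [Fintype V] {k : ℕ} (hk : 2 ≤ k)
    (hG : ∀ x, (G.neighborSet x).Nonempty) {S : Set G.Dart} (hS : IsKTDS (inflation G) k S)
    (hcard : S.ncard = Fintype.card V * k) {d : G.Dart} (hd : d ∈ S) : d.symm ∈ S := by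
  have hfiber : ∀ x, (S ∩ G.dartsAt x).ncard = k := by
    have hconst : ∑ _x : V, k = Fintype.card V * k := by simp
    rw [ncard_eq_sum_ncard_inter_dartsAt, ← hconst, eq_comm,
      Finset.sum_eq_sum_iff_of_le] at hcard
    · exact fun x => (hcard x (Finset.mem_univ x)).symm
    · exact fun x _ => le_ncard_inter_dartsAt hk hS (dartsAt_nonempty (hG x))
  have := hS d
  have hmem : d ∈ S ∩ G.dartsAt d.fst := ⟨hd, rfl⟩
  rw [ncard_inter_inflation_neighborSet, Set.ncard_sdiff_singleton_of_mem hmem, hfiber] at this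
  have hpos : 0 < (S ∩ {d.symm}).ncard := by omega
  obtain ⟨e, he, rfl⟩ := Set.nonempty_of_ncard_ne_zero hpos.ne'
  exact he

lemma even_ncard_of_symm_mem [Finite V] {S : Set G.Dart} (hS : ∀ d ∈ S, d.symm ∈ S) :
    Even S.ncard := by
  classical
  have := Fintype.ofFinite G.Dart
  rw [Set.ncard_eq_toFinset_card', Finset.card_eq_sum_card_image Dart.edge]
  refine Finset.even_sum _ fun e he => ?_
  obtain ⟨d, hd, rfl⟩ := Finset.mem_image.mp he
  rw [Set.mem_toFinset] at hd
  have : {a ∈ S.toFinset | a.edge = d.edge} = {d, d.symm} := by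
    ext a
    simp only [Finset.mem_filter, Set.mem_toFinset, dart_edge_eq_iff, Finset.mem_insert,
      Finset.mem_singleton]
    exact and_iff_right_of_imp fun h => h.elim (· ▸ hd) (· ▸ hS d hd)
  rw [this, Finset.card_pair d.symm_ne.symm]
  exact even_two

lemma card_mul_lt_ncard_of_isKTDS [Fintype V] {k : ℕ} (hk : 2 ≤ k)
    (hG : ∀ x, (G.neighborSet x).Nonempty) (hodd : Odd (Fintype.card V * k)) {S : Set G.Dart}
    (hS : IsKTDS (inflation G) k S) : Fintype.card V * k < S.ncard := by
  refine (card_mul_le_ncard_of_isKTDS hk hG hS).lt_of_ne fun hcard => ?_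
  have := even_ncard_of_symm_mem fun d hd => symm_mem_of_isKTDS_of_ncard_eq hk hG hS hcard.symm hd
  rw [← hcard] at this
  exact Nat.not_even_iff_odd.mpr hodd this

lemma ncard_dartsOf_inter_dartsAt [Finite V] {H : SimpleGraph V} (hle : H ≤ G) (x : V) :
    (G.dartsOf H ∩ G.dartsAt x).ncard = (H.neighborSet x).ncard := by
  refine Set.ncard_congr (fun d _ => d.snd) ?_ ?_ ?_
  · rintro d ⟨hd, rfl⟩
    exact hd
  · rintro d e ⟨-, hd⟩ ⟨-, he⟩ h
    exact Dart.ext _ _ (Prod.ext (hd.trans he.symm) h)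
  · exact fun y hy => ⟨⟨(x, y), hle hy⟩, ⟨hy, rfl⟩, rfl⟩

lemma ncard_dartsOf [Fintype V] {H : SimpleGraph V} (hle : H ≤ G) :
    (G.dartsOf H).ncard = ∑ x : V, (H.neighborSet x).ncard := by
  rw [ncard_eq_sum_ncard_inter_dartsAt]
  exact Finset.sum_congr rfl fun x _ => ncard_dartsOf_inter_dartsAt hle x

/-- Each dart of `H` sees its `deg_H - 1` companions and its reverse; any other dart sees all
`deg_H` darts of `H` in its clique. -/
lemma isKTDS_dartsOf [Finite V] {k : ℕ} {H : SimpleGraph V} (hle : H ≤ G)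
    (hH : ∀ x, k ≤ (H.neighborSet x).ncard) : IsKTDS (inflation G) k (G.dartsOf H) := by
  intro d
  have hdeg := hH d.fst
  rw [← ncard_dartsOf_inter_dartsAt hle] at hdeg
  rw [ncard_inter_inflation_neighborSet]
  by_cases hd : d ∈ G.dartsOf H
  · have hsymm : d.symm ∈ G.dartsOf H := (show H.Adj d.fst d.snd from hd).symm
    have hmem : d ∈ G.dartsOf H ∩ G.dartsAt d.fst := ⟨hd, rfl⟩
    rw [Set.ncard_sdiff_singleton_of_mem hmem, Set.inter_singleton_of_mem hsymm,
      Set.ncard_singleton]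
    omega
  · rw [Set.sdiff_singleton_eq_self fun h => hd h.1]
    omega

lemma ncard_neighborSet_sup [Finite V] {G₁ G₂ : SimpleGraph V}
    (h : Disjoint G₁ G₂) (x : V) :
    ((G₁ ⊔ G₂).neighborSet x).ncard =
      (G₁.neighborSet x).ncard + (G₂.neighborSet x).ncard := by
  rw [neighborSet_sup, Set.ncard_union_eq (disjoint_neighborSet.mpr h x)]

lemma neighborSet_nonempty_of_le {H : SimpleGraph V} (hle : H ≤ G) {k : ℕ} (hk : 0 < k) {x : V}
    (hx : k ≤ (H.neighborSet x).ncard) : (G.neighborSet x).Nonempty :=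
  (Set.nonempty_of_ncard_ne_zero (s := H.neighborSet x) (by omega)).mono fun _ h => hle h

theorem ktdn_inflation_eq_card_mul [Fintype V] {k : ℕ} (hk : 2 ≤ k) {H : SimpleGraph V}
    (hle : H ≤ G) (hH : ∀ x, (H.neighborSet x).ncard = k) :
    ktdn (inflation G) k = Fintype.card V * k := by
  have hG x := neighborSet_nonempty_of_le hle (by omega) (hH x).ge
  refine IsLeast.csInf_eq ⟨⟨G.dartsOf H, isKTDS_dartsOf hle fun x => (hH x).ge, ?_⟩, ?_⟩
  · simp [ncard_dartsOf hle, hH]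
  · rintro _ ⟨S, hS, rfl⟩
    exact card_mul_le_ncard_of_isKTDS hk hG hS

theorem ktdn_inflation_eq_card_mul_add_one [Fintype V] [DecidableEq V] {k : ℕ} (hk : 2 ≤ k)
    (hodd : Odd (Fintype.card V * k)) {H : SimpleGraph V} (hle : H ≤ G) (x₀ : V)
    (hH : ∀ x, (H.neighborSet x).ncard = k + if x = x₀ then 1 else 0) :
    ktdn (inflation G) k = Fintype.card V * k + 1 := by
  have hk' x : k ≤ (H.neighborSet x).ncard := (hH x).symm ▸ Nat.le_add_right _ _
  have hG x := neighborSet_nonempty_of_le hle (by omega) (hk' x)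
  refine IsLeast.csInf_eq ⟨⟨G.dartsOf H, isKTDS_dartsOf hle hk', ?_⟩, ?_⟩
  · simp [ncard_dartsOf hle, hH, Finset.sum_add_distrib]
  · rintro _ ⟨S, hS, rfl⟩
    exact card_mul_lt_ncard_of_isKTDS hk hG hodd hS

end SimpleGraph

section CyclicDistance

variable {n : ℕ}

lemma ZMod.val_add_natCast [NeZero n] (i : ZMod n) {c : ℕ} (hc : c < n) :
    (i + c).val = if i.val + c < n then i.val + c else i.val + c - n := by
  rw [ZMod.val_add, ZMod.val_natCast_of_lt hc]
  have := i.val_lt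
  split_ifs with h
  · exact Nat.mod_eq_of_lt h
  · rw [Nat.mod_eq_sub_mod (by omega), Nat.mod_eq_of_lt (by omega)]

lemma ZMod.sub_natCast_eq_add (i : ZMod n) {c : ℕ} (hc : c ≤ n) :
    i - c = i + ((n - c : ℕ) : ZMod n) := by
  rw [Nat.cast_sub hc, ZMod.natCast_self, zero_sub, sub_eq_add_neg]

lemma ZMod.val_sub_natCast [NeZero n] (i : ZMod n) {c : ℕ} (hc0 : 0 < c) (hc : c < n) :
    (i - c).val = if c ≤ i.val then i.val - c else i.val + n - c := by
  rw [ZMod.sub_natCast_eq_add i hc.le, ZMod.val_add_natCast i (by omega)]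
  have := i.val_lt
  split_ifs <;> omega

lemma ZMod.natCast_add_self_ne_zero {c : ℕ} (hc0 : 0 < c) (hc : 2 * c < n) :
    (c : ZMod n) + c ≠ 0 := by
  rw [← Nat.cast_add, Ne, ZMod.natCast_eq_zero_iff]
  exact fun h => absurd (Nat.le_of_dvd (by omega) h) (by omega)

lemma cycDist_comm (i j : ZMod n) : cycDist n i j = cycDist n j i :=
  min_comm _ _

lemma cycDist_self (i : ZMod n) : cycDist n i i = 0 := by
  simp [cycDist]

lemma cycDist_add_natCast [NeZero n] (i : ZMod n) {c : ℕ} (hc0 : 0 < c) (hc : c < n) :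
    cycDist n i (i + c) = min c (n - c) := by
  rw [cycDist, add_sub_cancel_left, sub_add_cancel_left, ← zero_sub,
    ZMod.sub_natCast_eq_add 0 hc.le, zero_add, ZMod.val_natCast_of_lt hc,
    ZMod.val_natCast_of_lt (by omega), min_comm]

lemma cycDist_sub_natCast [NeZero n] (i : ZMod n) {c : ℕ} (hc0 : 0 < c) (hc : c < n) :
    cycDist n i (i - c) = min c (n - c) := by
  rw [ZMod.sub_natCast_eq_add i hc.le, cycDist_add_natCast i (by omega) (by omega),
    Nat.sub_sub_self hc.le, min_comm]

lemma cycDist_eq_iff [NeZero n] {s : ℕ} (hs : 0 < s) (h2s : 2 * s ≤ n) {i j : ZMod n} :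
    cycDist n i j = s ↔ j = i + s ∨ j = i - s := by
  constructor
  · intro h
    have hj : j = i + ((j - i).val : ZMod n) := by rw [ZMod.natCast_zmod_val]; ring
    have hlt := (j - i).val_lt
    rcases Nat.eq_zero_or_pos (j - i).val with h0 | h0
    · rw [h0, Nat.cast_zero, add_zero] at hj
      rw [hj, cycDist_self] at h
      omega
    rw [hj, cycDist_add_natCast i h0 hlt] at h
    rcases min_choice (j - i).val (n - (j - i).val) with hmin | hmin <;> rw [hmin] at h
    · exact Or.inl (by rw [hj, h])
    · refine Or.inr ?_
      rw [hj, ZMod.sub_natCast_eq_add i (by omega), ← h, Nat.sub_sub_self hlt.le]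
  · rintro (rfl | rfl)
    · rw [cycDist_add_natCast i hs (by omega)]; omega
    · rw [cycDist_sub_natCast i hs (by omega)]; omega

end CyclicDistance

def distBand (n lo hi : ℕ) : SimpleGraph (ZMod n) :=
  fromRel fun i j => lo ≤ cycDist n i j ∧ cycDist n i j ≤ hi

section DistBand

variable {n : ℕ}

lemma distBand_adj {lo hi : ℕ} (hlo : 1 ≤ lo) {i j : ZMod n} :
    (distBand n lo hi).Adj i j ↔ lo ≤ cycDist n i j ∧ cycDist n i j ≤ hi := by
  rw [distBand, fromRel_adj, cycDist_comm j i, or_self, and_iff_right_iff_imp]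
  rintro h rfl
  rw [cycDist_self] at h
  omega

lemma distBand_eq_bot {lo hi : ℕ} (h : hi < lo) : distBand n lo hi = ⊥ := by
  ext i j
  rw [distBand, fromRel_adj, cycDist_comm j i, or_self, bot_adj, iff_false]
  omega

lemma distBand_succ {lo hi : ℕ} (hlo : 1 ≤ lo) (h : lo ≤ hi + 1) :
    distBand n lo (hi + 1) = distBand n lo hi ⊔ distBand n (hi + 1) (hi + 1) := by
  ext i j
  rw [sup_adj, distBand_adj hlo, distBand_adj hlo, distBand_adj (by omega)]
  omega

lemma disjoint_distBand {a b c d : ℕ} (hbc : b < c) :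
    Disjoint (distBand n a b) (distBand n c d) := by
  rw [← disjoint_edgeSet, Set.disjoint_left]
  rintro ⟨i, j⟩ h₁ h₂
  rw [mem_edgeSet, distBand, fromRel_adj, cycDist_comm j i, or_self] at h₁ h₂
  omega

lemma distBand_le_harary {m lo hi : ℕ} (hlo : 1 ≤ lo) (hhi : hi ≤ m / 2) :
    distBand n lo hi ≤ harary m n := by
  intro i j h
  rw [distBand_adj hlo] at h
  rw [harary, fromRel_adj]
  refine ⟨fun hij => ?_, Or.inl (Or.inl ⟨by omega, by omega⟩)⟩
  rw [hij, cycDist_self] at h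
  omega

variable [NeZero n]

lemma ncard_neighborSet_distBand_self {s : ℕ} (hs : 0 < s) (h2s : 2 * s < n) (i : ZMod n) :
    ((distBand n s s).neighborSet i).ncard = 2 := by
  have hnbr : (distBand n s s).neighborSet i = {i + s, i - s} := by
    ext j
    rw [mem_neighborSet, distBand_adj hs, ← le_antisymm_iff, eq_comm,
      cycDist_eq_iff hs h2s.le]
    rfl
  rw [hnbr, Set.ncard_pair]
  intro h
  rw [sub_eq_add_neg, add_right_inj, eq_neg_iff_add_eq_zero] at h
  exact ZMod.natCast_add_self_ne_zero hs h2s h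

lemma ncard_neighborSet_distBand {lo hi : ℕ} (hlo : 1 ≤ lo) (hhi : 2 * hi < n) (i : ZMod n) :
    ((distBand n lo hi).neighborSet i).ncard = 2 * (hi + 1 - lo) := by
  induction hi with
  | zero => rw [distBand_eq_bot (by omega), neighborSet_bot, Set.ncard_empty]; omega
  | succ hi ih =>
    rcases Nat.lt_or_ge (hi + 1) lo with h | h
    · rw [distBand_eq_bot h, neighborSet_bot, Set.ncard_empty]; omega
    rw [distBand_succ hlo h, ncard_neighborSet_sup (disjoint_distBand (Nat.lt_succ_self hi)),
      ih (by omega), ncard_neighborSet_distBand_self (by omega) hhi]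
    omega

end DistBand

def shiftGraph {A : Type*} [AddGroup A] (P : A → Prop) (c : A) : SimpleGraph A :=
  fromRel fun a b => P a ∧ b = a + c

section ShiftGraph

variable {A : Type*} [AddGroup A] {P : A → Prop} {c : A}

lemma neighborSet_shiftGraph (hc : c ≠ 0) (a : A) :
    (shiftGraph P c).neighborSet a = {b | P a ∧ b = a + c} ∪ {b | P (a - c) ∧ b = a - c} := by
  ext b
  simp only [mem_neighborSet, shiftGraph, fromRel_adj, Set.mem_union, Set.mem_ofPred_eq]
  constructor
  · rintro ⟨-, h | ⟨hP, rfl⟩⟩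
    · exact Or.inl h
    · exact Or.inr ⟨by rwa [add_sub_cancel_right], by rw [add_sub_cancel_right]⟩
  · rintro (⟨hP, rfl⟩ | ⟨hP, rfl⟩)
    · exact ⟨by simpa using hc, Or.inl ⟨hP, rfl⟩⟩
    · exact ⟨fun h => hc (sub_eq_self.mp h.symm), Or.inr ⟨hP, by rw [sub_add_cancel]⟩⟩

lemma ncard_neighborSet_shiftGraph [DecidablePred P] (hc : c + c ≠ 0) (a : A) :
    ((shiftGraph P c).neighborSet a).ncard =
      (if P a then 1 else 0) + if P (a - c) then 1 else 0 := by
  have hc₀ : c ≠ 0 := by rintro rfl; exact hc (add_zero 0)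
  have hcard : ∀ (p : Prop) [Decidable p] (b : A),
      {x | p ∧ x = b}.ncard = if p then 1 else 0 := by
    intro p _ b
    split_ifs with hp <;> simp [hp]
  have hdisj : Disjoint {b | P a ∧ b = a + c} {b | P (a - c) ∧ b = a - c} := by
    rw [Set.disjoint_left]
    rintro b ⟨-, rfl⟩ ⟨-, h⟩
    rw [sub_eq_add_neg, add_right_inj, eq_neg_iff_add_eq_zero] at h
    exact hc h
  rw [neighborSet_shiftGraph hc₀, Set.ncard_union_eq hdisj
    (Set.subsingleton_of_forall_eq (a + c) fun _ h => h.2).finite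
    (Set.subsingleton_of_forall_eq (a - c) fun _ h => h.2).finite, hcard, hcard]

lemma shiftGraph_le_distBand {n lo hi : ℕ} {P : ZMod n → Prop} {c : ZMod n} (hlo : 1 ≤ lo)
    (h : ∀ a, lo ≤ cycDist n a (a + c) ∧ cycDist n a (a + c) ≤ hi) :
    shiftGraph P c ≤ distBand n lo hi := by
  rintro a b ⟨-, (⟨-, rfl⟩ | ⟨-, rfl⟩)⟩
  · exact (distBand_adj hlo).mpr (h a)
  · exact ((distBand_adj hlo).mpr (h b)).symm

end ShiftGraph

/-- The matching `{0,1}, {2,3}, …` on `ZMod n`; for odd `n` it also contains `{n-1, 0}`. -/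
def evenSteps (n : ℕ) : SimpleGraph (ZMod n) :=
  shiftGraph (fun a => Even a.val) 1

def diameters (n : ℕ) : SimpleGraph (ZMod n) :=
  shiftGraph (fun _ => True) ((n / 2 : ℕ) : ZMod n)

/-- The chords of `H_{m,n}`, for `m` and `n` odd, that are not in its band of distances. -/
def hararyChords (n : ℕ) : SimpleGraph (ZMod n) :=
  shiftGraph (fun a => ∃ t : ℕ, t ≤ (n - 1) / 2 ∧ a = t) (((n - 1) / 2 : ℕ) : ZMod n)

section Chords

variable {n : ℕ}

lemma ncard_neighborSet_evenSteps [NeZero n] (hn : 3 ≤ n) (i : ZMod n) :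
    ((evenSteps n).neighborSet i).ncard = 1 + if Odd n ∧ i = 0 then 1 else 0 := by
  have h2 : (1 : ZMod n) + 1 ≠ 0 := by
    simpa using ZMod.natCast_add_self_ne_zero (n := n) one_pos (by omega)
  have hval := ZMod.val_sub_natCast i one_pos (by omega)
  rw [Nat.cast_one] at hval
  have hzero : i = 0 ↔ i.val = 0 := (ZMod.val_eq_zero i).symm
  rw [evenSteps, ncard_neighborSet_shiftGraph h2, hval]
  have := i.val_lt
  simp only [hzero, Nat.even_iff, Nat.odd_iff]
  split_ifs <;> omega

lemma evenSteps_le_distBand [NeZero n] (hn : 2 ≤ n) : evenSteps n ≤ distBand n 1 1 :=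
  shiftGraph_le_distBand le_rfl fun a => by
    have h := cycDist_add_natCast a one_pos (by omega : 1 < n)
    rw [Nat.cast_one] at h
    omega

lemma ncard_neighborSet_diameters [NeZero n] (hn : Even n) (i : ZMod n) :
    ((diameters n).neighborSet i).ncard = 1 := by
  have hpos : 0 < n := Nat.pos_of_ne_zero (NeZero.ne n)
  have h2 : ((n / 2 : ℕ) : ZMod n) + (n / 2 : ℕ) = 0 := by
    rw [← Nat.cast_add, ← two_mul, Nat.two_mul_div_two_of_even hn, ZMod.natCast_self]
  have h0 : ((n / 2 : ℕ) : ZMod n) ≠ 0 := by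
    rw [Ne, ZMod.natCast_eq_zero_iff]
    obtain ⟨r, rfl⟩ := hn
    exact fun h => absurd (Nat.le_of_dvd (by omega) h) (by omega)
  rw [diameters, neighborSet_shiftGraph h0, sub_eq_add_neg, neg_eq_of_add_eq_zero_right h2,
    Set.union_self]
  simp

lemma diameters_le_distBand [NeZero n] (hn : Even n) :
    diameters n ≤ distBand n (n / 2) (n / 2) := by
  obtain ⟨r, rfl⟩ := hn
  have := Nat.pos_of_ne_zero (NeZero.ne (r + r))
  refine shiftGraph_le_distBand (by omega) fun a => ?_
  rw [cycDist_add_natCast a (by omega) (by omega)]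
  omega

lemma diameters_le_harary {m : ℕ} (hm : Odd m) (hn : Even n) : diameters n ≤ harary m n := by
  rintro i j ⟨hij, h⟩
  rw [harary, fromRel_adj]
  refine ⟨hij, ?_⟩
  rw [Nat.odd_iff] at hm
  rw [Nat.even_iff] at hn
  rcases h with ⟨-, h⟩ | ⟨-, h⟩
  · exact Or.inl (Or.inr (Or.inl ⟨hm, hn, h⟩))
  · exact Or.inr (Or.inr (Or.inl ⟨hm, hn, h⟩))

lemma ncard_neighborSet_hararyChords [NeZero n] (hn : Odd n) (hn3 : 3 ≤ n) (i : ZMod n) :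
    ((hararyChords n).neighborSet i).ncard =
      1 + if i = (((n - 1) / 2 : ℕ) : ZMod n) then 1 else 0 := by
  obtain ⟨h, hh⟩ : ∃ h, (n - 1) / 2 = h := ⟨_, rfl⟩
  have hnh : n = 2 * h + 1 := by rw [Nat.odd_iff] at hn; omega
  have hmem : ∀ a : ZMod n, (∃ t : ℕ, t ≤ h ∧ a = t) ↔ a.val ≤ h := fun a =>
    ⟨fun ⟨t, ht, hat⟩ => by rw [hat, ZMod.val_natCast_of_lt (by omega)]; exact ht,
      fun ha => ⟨a.val, ha, (ZMod.natCast_zmod_val a).symm⟩⟩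
  have heq : i = (h : ZMod n) ↔ i.val = h :=
    ⟨fun hi => by rw [hi, ZMod.val_natCast_of_lt (by omega)],
      fun hi => by rw [← hi, ZMod.natCast_zmod_val]⟩
  rw [hararyChords, hh, ncard_neighborSet_shiftGraph (ZMod.natCast_add_self_ne_zero
    (by omega) (by omega))]
  simp only [hmem, heq, ZMod.val_sub_natCast i (by omega : 0 < h) (by omega : h < n)]
  have := i.val_lt
  split_ifs <;> omega

lemma hararyChords_le_distBand [NeZero n] (hn : Odd n) (hn3 : 3 ≤ n) :
    hararyChords n ≤ distBand n ((n - 1) / 2) ((n - 1) / 2) := by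
  rw [Nat.odd_iff] at hn
  refine shiftGraph_le_distBand (by omega) fun a => ?_
  rw [cycDist_add_natCast a (by omega) (by omega)]
  omega

lemma hararyChords_le_harary {m : ℕ} (hm : Odd m) (hn : Odd n) :
    hararyChords n ≤ harary m n := by
  rintro i j ⟨hij, h⟩
  rw [harary, fromRel_adj]
  refine ⟨hij, ?_⟩
  rw [Nat.odd_iff] at hm hn
  rcases h with ⟨hi, h⟩ | ⟨hj, h⟩
  · exact Or.inl (Or.inr (Or.inr ⟨hm, hn, hi, h⟩))
  · exact Or.inr (Or.inr (Or.inr ⟨hm, hn, hj, h⟩))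

end Chords

section Harary

variable {n : ℕ} [NeZero n]

lemma isKHLD_harary {m : ℕ} (hmn : m < n) : IsKHLD (harary m n) (m / 2) := by
  refine ⟨fun i => distBand n (i + 1) (i + 1), fun i => ⟨?_, fun x => ?_⟩,
    fun i j hij => ?_⟩
  · exact distBand_le_harary (by omega) (by omega)
  · exact ncard_neighborSet_distBand_self (by omega) (by omega) x
  · rcases Fin.lt_or_lt_of_ne hij with h | h
    · exact disjoint_distBand (by simpa using h)
    · exact (disjoint_distBand (by simpa using h)).symm

lemma exists_le_harary_ncard_neighborSet_of_odd {m k : ℕ} (hko : Odd k) (hkm : k ≤ m)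
    (hmn : m < n) :
    ∃ H ≤ harary m n, ∃ x₀ : ZMod n, ∀ x,
      (H.neighborSet x).ncard = k + if Odd n ∧ x = x₀ then 1 else 0 := by
  have hk2 := Nat.odd_iff.mp hko
  rcases hkm.lt_or_eq with hlt | rfl
  · have hsteps := evenSteps_le_distBand (n := n) (by omega)
    refine ⟨distBand n 2 ((k + 1) / 2) ⊔ evenSteps n, sup_le (distBand_le_harary (by omega)
      (by omega)) (hsteps.trans (distBand_le_harary le_rfl (by omega))), 0, fun x => ?_⟩
    rw [ncard_neighborSet_sup ((disjoint_distBand one_lt_two).symm.mono_right hsteps),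
      ncard_neighborSet_distBand (by omega) (by omega), ncard_neighborSet_evenSteps (by omega)]
    split_ifs <;> omega
  rcases Nat.even_or_odd n with hne | hno
  · refine ⟨distBand n 1 ((k - 1) / 2) ⊔ diameters n, sup_le (distBand_le_harary le_rfl
      (by omega)) (diameters_le_harary hko hne), 0, fun x => ?_⟩
    have hn2 := Nat.even_iff.mp hne
    rw [ncard_neighborSet_sup ((disjoint_distBand (by omega)).mono_right
      (diameters_le_distBand hne)), ncard_neighborSet_distBand le_rfl (by omega),
      ncard_neighborSet_diameters hne, if_neg fun h => Nat.not_odd_iff_even.mpr hne h.1]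
    omega
  · have hn2 := Nat.odd_iff.mp hno
    refine ⟨distBand n 1 ((k - 1) / 2) ⊔ hararyChords n, sup_le (distBand_le_harary le_rfl
      (by omega)) (hararyChords_le_harary hko hno), ((n - 1) / 2 : ℕ), fun x => ?_⟩
    rw [ncard_neighborSet_sup ((disjoint_distBand (by omega)).mono_right
      (hararyChords_le_distBand hno (by omega))), ncard_neighborSet_distBand le_rfl (by omega),
      ncard_neighborSet_hararyChords hno (by omega)]
    simp only [hno, true_and]
    omega

lemma exists_le_harary_ncard_neighborSet {m k : ℕ} (hkm : k ≤ m) (hmn : m < n) :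
    ∃ H ≤ harary m n, ∃ x₀ : ZMod n, ∀ x,
      (H.neighborSet x).ncard = k + if Odd k ∧ Odd n ∧ x = x₀ then 1 else 0 := by
  rcases Nat.even_or_odd k with hke | hko
  · refine ⟨distBand n 1 (k / 2), distBand_le_harary le_rfl (Nat.div_le_div_right hkm), 0,
      fun x => ?_⟩
    rw [ncard_neighborSet_distBand le_rfl (by omega),
      if_neg fun h => Nat.not_odd_iff_even.mpr hke h.1]
    rw [Nat.even_iff] at hke
    omega
  · simpa only [hko, true_and] using exists_le_harary_ncard_neighborSet_of_odd hko hkm hmn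

end Harary

/-- **Proposition (Harary graphs).** For `2 ≤ k ≤ m < n`, the Harary graph `H_{m,n}` is a
`⌊m/2⌋`-Hamiltonian-like decomposable graph, and `γ_{×k,t}((H_{m,n})_I) = nk + 1` if `k`
and `n` are both odd, and `= nk` otherwise. -/
theorem stmt15 (m n k : ℕ) (hk : 2 ≤ k) (hkm : k ≤ m) (hmn : m < n) :
    IsKHLD (harary m n) (m / 2) ∧
    (Odd k ∧ Odd n → ktdn (inflation (harary m n)) k = n * k + 1) ∧
    (¬ (Odd k ∧ Odd n) → ktdn (inflation (harary m n)) k = n * k) := by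
  have : NeZero n := ⟨by omega⟩
  obtain ⟨H, hle, x₀, hH⟩ := exists_le_harary_ncard_neighborSet hkm hmn
  refine ⟨isKHLD_harary hmn, fun hodd => ?_, fun hodd => ?_⟩
  · have hodd' : Odd (Fintype.card (ZMod n) * k) := by rw [ZMod.card]; exact hodd.2.mul hodd.1
    have := ktdn_inflation_eq_card_mul_add_one hk hodd' hle x₀ fun x => by
      simpa [hodd.1, hodd.2] using hH x
    rwa [ZMod.card] at this
  · have := ktdn_inflation_eq_card_mul hk hle fun x => by
      rw [hH x, if_neg fun h => hodd ⟨h.1, h.2.1⟩, add_zero]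
    rwa [ZMod.card] at this
end

section
/- Let p ≥ k ≥ 2 be integers and let G be the complete bipartite graph K_{p,p}. Then G is a (⌊p/2⌋ − 1)-HLPM-graph if p is even, and G is a ⌊p/2⌋-Hamiltonian-like decomposable graph if p is odd; consequently γ_{×k,t}(G_I) = 2pk. -/
open SimpleGraph

/-!
For `c : Fin p` the shift matchings `M_c = {inl i ~ inr (i + c)}` are `p` pairwise disjoint
perfect matchings of `K_{p,p}`, and the union of any `s` of them is an `s`-factor. The unions
`M_{2t} ∪ M_{2t+1}` for `2t + 1 < p` are `⌊p/2⌋` edge-disjoint 2-factors; keeping only the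
first `p/2 - 1` of them leaves `M_{p-1}` free as a perfect matching.

A dart `d` of `G` has as neighbours in `G_I` the other darts with tail `d.fst` and its reverse,
so for any `k`-factor `D` of `G` exactly `k` of them are darts of `D`: the darts of `D` form a
`k`-tuple total dominating set of size `|V| k`. If `G` is `Δ`-regular, `G_I` is `Δ`-regular
on `|V| Δ` vertices, and double counting the pairs `(v, s)` with `s ∈ S` adjacent to `v` shows
`|V| Δ k ≤ |S| Δ` for every `k`-tuple total dominating set `S`. For `K_{p,p}` take
`D = M_0 ∪ ⋯ ∪ M_{k-1}`.
-/

open Function Sum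

section Factors

variable {V : Type*}

-- `IsTwoFactor G H` and `IsPerfectMatchingGraph G H` unfold to `IsFactor G H 2` and
-- `IsFactor G H 1`.
def IsFactor (G H : SimpleGraph V) (k : ℕ) : Prop :=
  H ≤ G ∧ ∀ v, (H.neighborSet v).ncard = k

theorem disjoint_biSup_of_notMem {α ι : Type*} [Order.Frame α] {f : ι → α}
    (hf : Pairwise (Disjoint on f)) {s : Set ι} {c : ι} (hc : c ∉ s) :
    Disjoint (f c) (⨆ i ∈ s, f i) :=
  disjoint_iSup₂_iff.mpr fun _ hi => hf (ne_of_mem_of_not_mem hi hc).symm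

theorem disjoint_biSup_biSup {α ι : Type*} [Order.Frame α] {f : ι → α}
    (hf : Pairwise (Disjoint on f)) {s t : Set ι} (hst : Disjoint s t) :
    Disjoint (⨆ i ∈ s, f i) (⨆ i ∈ t, f i) :=
  iSup₂_disjoint_iff.mpr fun _ hi => disjoint_biSup_of_notMem hf (Set.disjoint_left.mp hst hi)

theorem isFactor_biSup {G : SimpleGraph V} {ι : Type*} {M : ι → SimpleGraph V}
    (hM : ∀ i, IsPerfectMatchingGraph G (M i)) (hdisj : Pairwise (Disjoint on M))
    (s : Finset ι) : IsFactor G (⨆ i ∈ s, M i) s.card := by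
  refine ⟨iSup₂_le fun i _ => (hM i).1, fun v => ?_⟩
  choose w hw using fun i => Set.ncard_eq_one.mp ((hM i).2 v)
  have hN : (⨆ i ∈ s, M i).neighborSet v = w '' s := by
    ext u
    simp [hw, eq_comm]
  have hinj : Set.InjOn w s := fun i _ j _ hij => by
    by_contra hne
    have hi : (M i).Adj v (w i) := by simp [← mem_neighborSet, hw]
    have hj : (M j).Adj v (w i) := by simp [← mem_neighborSet, hw, hij]
    exact disjoint_left.mp (hdisj hne) _ _ hi hj
  rw [hN, hinj.ncard_image, Set.ncard_coe_finset]

end Factors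

section ShiftMatching

variable {p : ℕ}

def shiftMatching (c : Fin p) : SimpleGraph (Fin p ⊕ Fin p) :=
  SimpleGraph.fromRel fun a b => ∃ i, a = inl i ∧ b = inr (i + c)

theorem shiftMatching_neighborSet_inl (c i : Fin p) :
    (shiftMatching c).neighborSet (inl i) = {inr (i + c)} := by
  ext b
  cases b <;> simp [shiftMatching]

theorem shiftMatching_neighborSet_inr [NeZero p] (c j : Fin p) :
    (shiftMatching c).neighborSet (inr j) = {inl (j - c)} := by
  ext b
  cases b <;> simp [shiftMatching, eq_sub_iff_add_eq, eq_comm (a := j)]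

theorem isPerfectMatchingGraph_shiftMatching [NeZero p] (c : Fin p) :
    IsPerfectMatchingGraph (completeBipartiteGraph (Fin p) (Fin p)) (shiftMatching c) := by
  refine ⟨fun a b hab => ?_, fun v => ?_⟩
  · cases a <;> cases b <;> simp_all [shiftMatching]
  · cases v <;> simp [shiftMatching_neighborSet_inl, shiftMatching_neighborSet_inr]

theorem pairwise_disjoint_shiftMatching :
    Pairwise (Disjoint on (shiftMatching : Fin p → SimpleGraph (Fin p ⊕ Fin p))) := by
  intro c d hcd
  refine disjoint_left.mpr fun a b hc hd => hcd ?_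
  simp only [shiftMatching, SimpleGraph.fromRel_adj] at hc hd
  aesop

end ShiftMatching

theorem exists_twoFactors_disjoint_shiftMatching {p n : ℕ} [NeZero p] (hn : 2 * n ≤ p) :
    ∃ F : Fin n → SimpleGraph (Fin p ⊕ Fin p),
      (∀ t, IsTwoFactor (completeBipartiteGraph (Fin p) (Fin p)) (F t)) ∧
      (∀ t t', t ≠ t' → Disjoint (F t) (F t')) ∧
      ∀ c : Fin p, 2 * n ≤ c.val → ∀ t, Disjoint (shiftMatching c) (F t) := by
  let pair (t : Fin n) : Finset (Fin p) := {⟨2 * t, by omega⟩, ⟨2 * t + 1, by omega⟩}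
  have mem_pair (t : Fin n) (c : Fin p) : c ∈ pair t ↔ c.val / 2 = t.val := by
    simp only [pair, Finset.mem_insert, Finset.mem_singleton, Fin.ext_iff]
    omega
  have card_pair (t : Fin n) : (pair t).card = 2 :=
    Finset.card_pair (by simp [Fin.ext_iff])
  refine ⟨fun t => ⨆ c ∈ pair t, shiftMatching c, fun t => ?_, fun t t' htt' => ?_,
    fun c hc t => ?_⟩
  · have h := isFactor_biSup isPerfectMatchingGraph_shiftMatching
      pairwise_disjoint_shiftMatching (pair t)
    rw [card_pair] at h
    exact h
  · refine disjoint_biSup_biSup pairwise_disjoint_shiftMatching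
      (Set.disjoint_left.mpr fun c hc hc' => htt' (Fin.ext ?_))
    rw [Finset.mem_coe, mem_pair] at hc hc'
    rw [← hc, ← hc']
  · refine disjoint_biSup_of_notMem pairwise_disjoint_shiftMatching fun hct => ?_
    rw [Finset.mem_coe, mem_pair] at hct
    omega

theorem completeBipartiteGraph_isKHLD (p : ℕ) [NeZero p] :
    IsKHLD (completeBipartiteGraph (Fin p) (Fin p)) (p / 2) := by
  obtain ⟨F, hF, hdisj, -⟩ :=
    exists_twoFactors_disjoint_shiftMatching (p := p) (n := p / 2) (by omega)
  exact ⟨F, hF, hdisj⟩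

theorem completeBipartiteGraph_isKHLPM (p : ℕ) [NeZero p] :
    IsKHLPM (completeBipartiteGraph (Fin p) (Fin p)) (p / 2 - 1) := by
  have hp : p - 1 < p := Nat.sub_one_lt (NeZero.ne p)
  obtain ⟨F, hF, hdisj, hM⟩ :=
    exists_twoFactors_disjoint_shiftMatching (p := p) (n := p / 2 - 1) (by omega)
  exact ⟨F, shiftMatching ⟨p - 1, hp⟩, hF, hdisj, isPerfectMatchingGraph_shiftMatching _,
    hM _ (by simp; omega)⟩

section Inflation

variable {V : Type*} {G : SimpleGraph V}

theorem inflation_adj {d d' : G.Dart} :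
    (inflation G).Adj d d' ↔ d ≠ d' ∧ (d.fst = d'.fst ∨ d' = d.symm) := by
  simp only [inflation, fromRel_adj, Dart.ext_iff, Dart.symm_toProd, ne_eq, Prod.ext_iff,
    Prod.fst_swap, Prod.snd_swap]
  grind

theorem ncard_inter_neighborSet_inflation {D : SimpleGraph V} (hD : D ≤ G) (d : G.Dart) :
    ({e : G.Dart | D.Adj e.fst e.snd} ∩ (inflation G).neighborSet d).ncard =
      (D.neighborSet d.fst).ncard := by
  classical
  refine Set.ncard_congr (fun e _ => if d.fst = e.fst then e.snd else e.fst) ?_ ?_ ?_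
  · rintro e ⟨he, hed⟩
    rw [mem_neighborSet, inflation_adj] at hed
    split_ifs with h
    · rwa [mem_neighborSet, h]
    · obtain rfl := hed.2.resolve_left h
      exact he.symm
  · rintro e₁ e₂ ⟨-, hed₁⟩ ⟨-, hed₂⟩ h
    rw [mem_neighborSet, inflation_adj] at hed₁ hed₂
    rcases hed₁ with ⟨hne₁, h₁ | rfl⟩ <;> rcases hed₂ with ⟨hne₂, h₂ | rfl⟩ <;>
      simp_all [Dart.ext_iff, Prod.ext_iff]
  · intro x hx
    by_cases hxd : x = d.snd
    · subst hxd
      refine ⟨d.symm, ⟨hx.symm, ?_⟩, by simp⟩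
      rw [mem_neighborSet, inflation_adj]
      exact ⟨d.symm_ne.symm, Or.inr rfl⟩
    · refine ⟨⟨(d.fst, x), hD hx⟩, ⟨hx, ?_⟩, by simp⟩
      rw [mem_neighborSet, inflation_adj]
      exact ⟨fun h => hxd (by rw [h]), Or.inl rfl⟩

theorem ncard_neighborSet_inflation (d : G.Dart) :
    ((inflation G).neighborSet d).ncard = (G.neighborSet d.fst).ncard := by
  simpa using ncard_inter_neighborSet_inflation le_rfl d

theorem isKTDS_inflation_setOf_dart_adj {D : SimpleGraph V} {k : ℕ} (hD : IsFactor G D k) :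
    IsKTDS (inflation G) k {e : G.Dart | D.Adj e.fst e.snd} := fun d =>
  ((ncard_inter_neighborSet_inflation hD.1 d).trans (hD.2 _)).ge

theorem ncard_setOf_dart_adj [Finite V] {D : SimpleGraph V} {k : ℕ} (hD : IsFactor G D k) :
    {e : G.Dart | D.Adj e.fst e.snd}.ncard = Nat.card V * k := by
  have : Fintype V := Fintype.ofFinite V
  let e : {e : G.Dart | D.Adj e.fst e.snd} ≃ Σ v, D.neighborSet v :=
    { toFun := fun e => ⟨e.1.fst, e.1.snd, e.2⟩
      invFun := fun x => ⟨⟨(x.1, x.2), hD.1 x.2.2⟩, x.2.2⟩ }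
  rw [← Nat.card_coe_set_eq, Nat.card_congr e, Nat.card_sigma]
  simp [Nat.card_coe_set_eq, hD.2]

end Inflation

theorem IsKTDS.card_mul_le {W : Type*} [Finite W] {H : SimpleGraph W} {k Δ : ℕ} {S : Set W}
    (hS : IsKTDS H k S) (hΔ : ∀ w, (H.neighborSet w).ncard ≤ Δ) :
    Nat.card W * k ≤ S.ncard * Δ := by
  classical
  have : Fintype W := Fintype.ofFinite W
  calc Nat.card W * k = ∑ _w : W, k := by simp
    _ ≤ ∑ w : W, (S ∩ H.neighborSet w).ncard := Finset.sum_le_sum fun w _ => hS w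
    _ = ∑ w : W, (S.toFinset.bipartiteAbove H.Adj w).card := by
        refine Finset.sum_congr rfl fun w _ => ?_
        rw [← Set.ncard_coe_finset]
        congr 1
        ext; simp [Finset.bipartiteAbove]
    _ = ∑ s ∈ S.toFinset, (Finset.univ.bipartiteBelow H.Adj s).card :=
        Finset.sum_card_bipartiteAbove_eq_sum_card_bipartiteBelow _
    _ ≤ ∑ _s ∈ S.toFinset, Δ := by
        refine Finset.sum_le_sum fun s _ => ?_
        have hN : (Finset.univ.bipartiteBelow H.Adj s : Set W) = H.neighborSet s := by
          ext
          simp [Finset.bipartiteBelow, adj_comm]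
        rw [← Set.ncard_coe_finset, hN]
        exact hΔ s
    _ = S.ncard * Δ := by simp [Set.ncard_eq_toFinset_card']

theorem ktdn_inflation_of_isFactor {V : Type*} [Finite V] {G D : SimpleGraph V} {Δ k : ℕ}
    (hΔ : 0 < Δ) (hG : ∀ v, (G.neighborSet v).ncard = Δ) (hD : IsFactor G D k) :
    ktdn (inflation G) k = Nat.card V * k := by
  have hS := isKTDS_inflation_setOf_dart_adj hD
  have hlower (T : Set G.Dart) (hT : IsKTDS (inflation G) k T) : Nat.card V * k ≤ T.ncard := by
    have : Finite G.Dart := Finite.of_injective _ Dart.toProd_injective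
    have hcard : Nat.card G.Dart = Nat.card V * Δ := by
      simpa using ncard_setOf_dart_adj (G := G) ⟨le_rfl, hG⟩
    have h := hT.card_mul_le fun d => (ncard_neighborSet_inflation d).trans_le (hG _).le
    rw [hcard, mul_right_comm] at h
    exact Nat.le_of_mul_le_mul_right h hΔ
  refine le_antisymm (Nat.sInf_le ⟨_, hS, ncard_setOf_dart_adj hD⟩) ?_
  exact le_csInf ⟨_, _, hS, rfl⟩ fun n ⟨T, hT, hn⟩ => hn ▸ hlower T hT

theorem completeBipartiteGraph_ncard_neighborSet (p : ℕ) (v : Fin p ⊕ Fin p) :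
    ((completeBipartiteGraph (Fin p) (Fin p)).neighborSet v).ncard = p := by
  have hl : ∀ i, (completeBipartiteGraph (Fin p) (Fin p)).neighborSet (inl i) = Set.range inr :=
    fun i => by ext (_ | _) <;> simp
  have hr : ∀ j, (completeBipartiteGraph (Fin p) (Fin p)).neighborSet (inr j) = Set.range inl :=
    fun j => by ext (_ | _) <;> simp
  cases v with
  | inl i => rw [hl, Set.ncard_range_of_injective inr_injective, Nat.card_fin]
  | inr j => rw [hr, Set.ncard_range_of_injective inl_injective, Nat.card_fin]

theorem exists_isFactor_completeBipartiteGraph {p k : ℕ} [NeZero p] (hkp : k ≤ p) :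
    ∃ D, IsFactor (completeBipartiteGraph (Fin p) (Fin p)) D k := by
  have h := isFactor_biSup isPerfectMatchingGraph_shiftMatching pairwise_disjoint_shiftMatching
    (Finset.univ.map (Fin.castLEEmb hkp))
  rw [Finset.card_map, Finset.card_univ, Fintype.card_fin] at h
  exact ⟨_, h⟩

/-- **Proposition (`K_{p,p}`).** For `p ≥ k ≥ 2`, the complete bipartite graph `K_{p,p}`
is a `(⌊p/2⌋ - 1)`HLPM-graph if `p` is even, is a `⌊p/2⌋`-Hamiltonian-like decomposable
graph if `p` is odd, and `γ_{×k,t}((K_{p,p})_I) = 2pk`. -/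
theorem stmt16 (p k : ℕ) (hk : 2 ≤ k) (hkp : k ≤ p) :
    (Even p → IsKHLPM (completeBipartiteGraph (Fin p) (Fin p)) (p / 2 - 1)) ∧
    (Odd p → IsKHLD (completeBipartiteGraph (Fin p) (Fin p)) (p / 2)) ∧
    ktdn (inflation (completeBipartiteGraph (Fin p) (Fin p))) k = 2 * p * k := by
  have : NeZero p := ⟨by omega⟩
  obtain ⟨D, hD⟩ := exists_isFactor_completeBipartiteGraph hkp
  refine ⟨fun _ => completeBipartiteGraph_isKHLPM p,
    fun _ => completeBipartiteGraph_isKHLD p, ?_⟩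
  rw [ktdn_inflation_of_isFactor (Nat.pos_of_neZero p)
    (completeBipartiteGraph_ncard_neighborSet p) hD]
  simp [two_mul]
end

section
/- Let q ≥ p > k ≥ 2 be integers and let G be the complete bipartite graph K_{p,q}. Then γ_{×k,t}(G_I) = 2pk + (q − p)(k + 1). -/
open SimpleGraph

/-! In the inflation, a dart `d` is adjacent exactly to the other darts with the same tail and
to its reverse. Hence, for `k ≥ 2`, a set `S` of darts is a `k`-tuple total dominating set iff
every clique `X_v` holds at least `k` darts of `S`, and at least `k + 1` if it holds a dart of `S`
whose reverse is not in `S`.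

For `K_{p,q}`, let `a` be the number of right cliques holding such an unmatched dart. The right
cliques hold at least `qk + a` darts of `S`. The other `q - a` right cliques hold only matched
darts, whose reverses lie in the left cliques, so the left cliques hold at least
`max (pk) ((q - a)k)`. Minimising over `a` gives `2pk + (q - p)(k + 1)`. This is attained by
identifying the left part and `p` of the right vertices with the group `Fin p`, taking both
orientations of the edges `x y` with `x + y` in a fixed `k`-set, and `k + 1` darts out of each of
the remaining `q - p` right vertices. -/

theorem Set.ncard_inter_insert {α : Type*} {A B : Set α} {x : α} (hA : A.Finite) (hx : x ∉ B)
    [Decidable (x ∈ A)] :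
    (A ∩ insert x B).ncard = (A ∩ B).ncard + if x ∈ A then 1 else 0 := by
  split_ifs with h
  · rw [Set.inter_insert_of_mem h,
      Set.ncard_insert_of_notMem (fun h' => hx h'.2) (hA.subset Set.inter_subset_left)]
  · rw [Set.inter_insert_of_notMem h, add_zero]

namespace SimpleGraph

variable {V : Type*} {G : SimpleGraph V}

instance Dart.finite_s17 [Finite V] : Finite G.Dart :=
  Finite.of_injective _ Dart.toProd_injective

/-- `|S ∩ X_v|` in the inflation. -/
noncomputable def tailCount (S : Set G.Dart) (v : V) : ℕ :=
  (S ∩ {d | d.fst = v}).ncard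

theorem inflation_adj {d e : G.Dart} :
    (inflation G).Adj d e ↔ d ≠ e ∧ (d.fst = e.fst ∨ e = d.symm) := by
  simp only [inflation, fromRel_adj, Dart.ext_iff e d.symm, Dart.symm_toProd]
  grind [Prod.swap_swap]

theorem insert_inflation_neighborSet (d : G.Dart) :
    insert d ((inflation G).neighborSet d) = insert d.symm {e | e.fst = d.fst} := by
  ext e
  simp only [Set.mem_insert_iff, mem_neighborSet, inflation_adj, Set.mem_ofPred_eq]
  by_cases h : e = d
  · subst h; simp
  · have := Ne.symm h
    tauto

open Classical in
/-- Stated with both indicator terms added, to avoid truncated subtraction. -/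
theorem ncard_inter_inflation_neighborSet_add [Finite V] (S : Set G.Dart) (d : G.Dart) :
    (S ∩ (inflation G).neighborSet d).ncard + (if d ∈ S then 1 else 0)
      = tailCount S d.fst + if d.symm ∈ S then 1 else 0 := by
  rw [tailCount, ← Set.ncard_inter_insert S.toFinite (fun h => (inflation G).irrefl h),
    insert_inflation_neighborSet, Set.ncard_inter_insert S.toFinite (d.fst_ne_snd ·.symm)]

theorem isKTDS_inflation_of_le_tailCount [Finite V] {k : ℕ} {S : Set G.Dart}
    (hge : ∀ d : G.Dart, k ≤ tailCount S d.fst)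
    (hunm : ∀ d ∈ S, d.symm ∉ S → k + 1 ≤ tailCount S d.fst) :
    IsKTDS (inflation G) k S := by
  classical
  intro d
  have hd_count := ncard_inter_inflation_neighborSet_add S d
  have := hge d
  by_cases hd : d ∈ S
  · by_cases hd' : d.symm ∈ S
    · rw [if_pos hd, if_pos hd'] at hd_count
      omega
    · rw [if_pos hd, if_neg hd'] at hd_count
      have := hunm d hd hd'
      omega
  · rw [if_neg hd] at hd_count
    split_ifs at hd_count <;> omega

theorem isKTDS_inflation_iff [Finite V] {k : ℕ} (hk : 2 ≤ k) {S : Set G.Dart} :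
    IsKTDS (inflation G) k S ↔
      (∀ d : G.Dart, k ≤ tailCount S d.fst) ∧
        ∀ d ∈ S, d.symm ∉ S → k + 1 ≤ tailCount S d.fst := by
  classical
  refine ⟨fun hS => ?_, fun h => isKTDS_inflation_of_le_tailCount h.1 h.2⟩
  have key := ncard_inter_inflation_neighborSet_add S
  have hunm : ∀ d ∈ S, d.symm ∉ S → k + 1 ≤ tailCount S d.fst := by
    intro d hd hd'
    have := key d
    rw [if_pos hd, if_neg hd'] at this
    have := hS d
    omega
  refine ⟨fun d => ?_, hunm⟩
  -- otherwise `d` would have at most one neighbour in `S`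
  obtain ⟨e, he, hed⟩ : (S ∩ {e | e.fst = d.fst}).Nonempty := by
    apply Set.nonempty_of_ncard_ne_zero
    change tailCount S d.fst ≠ 0
    have := key d
    have := hS d
    split_ifs at * <;> omega
  rw [← show e.fst = d.fst from hed]
  by_cases he' : e.symm ∈ S
  · have := key e
    rw [if_pos he, if_pos he'] at this
    have := hS e
    omega
  · exact (hunm e he he').trans' k.le_succ

theorem ncard_inter_fst_mem [Fintype V] (S : Set G.Dart) (s : Finset V) :
    (S ∩ {d | d.fst ∈ s}).ncard = ∑ v ∈ s, tailCount S v := by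
  classical
  rw [Set.ncard_eq_toFinset_card', Finset.card_eq_sum_card_fiberwise (f := fun d => d.fst)
    (fun d hd => (Set.mem_toFinset.1 hd).2)]
  refine Finset.sum_congr rfl fun v hv => ?_
  rw [tailCount, Set.ncard_eq_toFinset_card']
  congr 1
  ext d
  simp only [Set.toFinset_inter, Set.toFinset_ofPred, Finset.mem_filter, Finset.mem_inter,
    Finset.mem_univ, true_and]
  constructor
  · rintro ⟨⟨h1, -⟩, h3⟩; exact ⟨h1, h3⟩
  · rintro ⟨h1, h3⟩; exact ⟨⟨h1, h3 ▸ hv⟩, h3⟩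

theorem ncard_eq_sum_tailCount [Fintype V] (S : Set G.Dart) :
    S.ncard = ∑ v, tailCount S v := by
  simpa using ncard_inter_fst_mem S Finset.univ

section Iso

variable {W W' : Type*} {H : SimpleGraph W} {H' : SimpleGraph W'}

theorem IsKTDS.image_iso (e : H ≃g H') {k : ℕ} {S : Set W} (hS : IsKTDS H k S) :
    IsKTDS H' k (e '' S) := by
  intro v
  obtain ⟨v, rfl⟩ := e.surjective v
  rw [← e.image_neighborSet, ← Set.image_inter e.injective,
    Set.ncard_image_of_injective _ e.injective]
  exact hS v

theorem ktdn_eq_ncard {k : ℕ} {S : Set W} (hS : IsKTDS H k S)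
    (hmin : ∀ T, IsKTDS H k T → S.ncard ≤ T.ncard) : ktdn H k = S.ncard :=
  le_antisymm (Nat.sInf_le ⟨S, hS, rfl⟩)
    (le_csInf ⟨_, S, hS, rfl⟩ fun _ ⟨T, hT, hn⟩ => hn ▸ hmin T hT)

def Iso.inflation (e : H ≃g H') : inflation H ≃g inflation H' where
  toFun := e.toHom.mapDart
  invFun := e.symm.toHom.mapDart
  left_inv d := by ext <;> simp
  right_inv d := by ext <;> simp
  map_rel_iff' := by simp [inflation_adj, Dart.ext_iff, Prod.ext_iff]

end Iso

end SimpleGraph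

namespace SimpleGraph.completeBipartiteGraph

open Sum

section

variable {V W : Type*}

def dartInl (v : V) (w : W) : (completeBipartiteGraph V W).Dart := ⟨(inl v, inr w), by simp⟩

def dartInr (w : W) (v : V) : (completeBipartiteGraph V W).Dart := ⟨(inr w, inl v), by simp⟩

theorem dartInl_injective (v : V) : Function.Injective (dartInl v : W → _) :=
  fun _ _ h => inr_injective (congrArg (·.snd) h)

theorem dartInr_injective (w : W) : Function.Injective (dartInr w : V → _) :=
  fun _ _ h => inl_injective (congrArg (·.snd) h)

theorem exists_dartInl_eq {d : (completeBipartiteGraph V W).Dart} {v : V} (h : d.fst = inl v) :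
    ∃ w, dartInl v w = d := by
  obtain ⟨⟨a, b | b⟩, hadj⟩ := d
  · cases h; simp at hadj
  · cases h; exact ⟨b, rfl⟩

theorem exists_dartInr_eq {d : (completeBipartiteGraph V W).Dart} {w : W} (h : d.fst = inr w) :
    ∃ v, dartInr w v = d := by
  obtain ⟨⟨a, b | b⟩, hadj⟩ := d
  · cases h; exact ⟨b, rfl⟩
  · cases h; simp at hadj

theorem tailCount_inl (S : Set (completeBipartiteGraph V W).Dart) (v : V) :
    tailCount S (inl v) = {w | dartInl v w ∈ S}.ncard := by
  rw [tailCount, ← Set.ncard_image_of_injective {w | dartInl v w ∈ S} (dartInl_injective v)]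
  congr 1
  ext d
  constructor
  · rintro ⟨hd, hfst⟩
    obtain ⟨w, rfl⟩ := exists_dartInl_eq hfst
    exact ⟨w, hd, rfl⟩
  · rintro ⟨w, hw, rfl⟩
    exact ⟨hw, rfl⟩

theorem tailCount_inr (S : Set (completeBipartiteGraph V W).Dart) (w : W) :
    tailCount S (inr w) = {v | dartInr w v ∈ S}.ncard := by
  rw [tailCount, ← Set.ncard_image_of_injective {v | dartInr w v ∈ S} (dartInr_injective w)]
  congr 1
  ext d
  constructor
  · rintro ⟨hd, hfst⟩
    obtain ⟨v, rfl⟩ := exists_dartInr_eq hfst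
    exact ⟨v, hd, rfl⟩
  · rintro ⟨v, hv, rfl⟩
    exact ⟨hv, rfl⟩

variable [Fintype V] [Fintype W]

theorem sum_tailCount_inr_le_of_symm_mem {S : Set (completeBipartiteGraph V W).Dart}
    {s : Finset W} (hS : ∀ w ∈ s, ∀ d ∈ S, d.fst = inr w → d.symm ∈ S) :
    ∑ w ∈ s, tailCount S (inr w) ≤ ∑ v, tailCount S (inl v) := by
  have hr := ncard_inter_fst_mem S (s.map .inr)
  have hl := ncard_inter_fst_mem S (Finset.univ.map .inl)
  simp only [Finset.sum_map, Function.Embedding.inl_apply, Function.Embedding.inr_apply] at hl hr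
  rw [← hl, ← hr]
  refine Set.ncard_le_ncard_of_injOn Dart.symm ?_ Dart.symm_involutive.injective.injOn
  rintro d ⟨hd, hfst⟩
  obtain ⟨w, hw, hdw⟩ := Finset.mem_map.1 hfst
  obtain ⟨v, rfl⟩ := exists_dartInr_eq hdw.symm
  exact ⟨hS w hw _ hd rfl, by simp [dartInr]⟩

theorem le_ncard_of_isKTDS_inflation [Nonempty V] [Nonempty W] {k : ℕ} (hk : 2 ≤ k)
    (hVW : Fintype.card V ≤ Fintype.card W) {S : Set (completeBipartiteGraph V W).Dart}
    (hS : IsKTDS (inflation (completeBipartiteGraph V W)) k S) :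
    2 * Fintype.card V * k + (Fintype.card W - Fintype.card V) * (k + 1) ≤ S.ncard := by
  classical
  obtain ⟨hge, hunm⟩ := (isKTDS_inflation_iff hk).1 hS
  set D := Finset.univ.filter fun w : W => ∃ d ∈ S, d.fst = inr w ∧ d.symm ∉ S
  have hD : ∀ w ∈ D, k + 1 ≤ tailCount S (inr w) := by
    intro w hw
    obtain ⟨d, hd, hdw, hd'⟩ := (Finset.mem_filter.1 hw).2
    exact hdw ▸ hunm d hd hd'
  have hDc : ∀ w ∈ Dᶜ, ∀ d ∈ S, d.fst = inr w → d.symm ∈ S := by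
    intro w hw d hd hdw
    by_contra h
    exact Finset.mem_compl.1 hw (Finset.mem_filter.2 ⟨Finset.mem_univ _, d, hd, hdw, h⟩)
  have hL : Fintype.card V * k ≤ ∑ v, tailCount S (inl v) := by
    simpa using Finset.card_nsmul_le_sum Finset.univ (fun v => tailCount S (inl v)) k
      fun v _ => hge (dartInl v (Classical.arbitrary W))
  have hDc_le := sum_tailCount_inr_le_of_symm_mem hDc
  have hDc_ge : Dᶜ.card * k ≤ ∑ w ∈ Dᶜ, tailCount S (inr w) := by
    simpa using Finset.card_nsmul_le_sum Dᶜ (fun w => tailCount S (inr w)) k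
      fun w _ => hge (dartInr w (Classical.arbitrary V))
  have hD_ge : D.card * (k + 1) ≤ ∑ w ∈ D, tailCount S (inr w) := by
    simpa using Finset.card_nsmul_le_sum D _ (k + 1) hD
  have hcard : D.card + Dᶜ.card = Fintype.card W := Finset.card_add_card_compl D
  rw [ncard_eq_sum_tailCount, Fintype.sum_sum_type, ← Finset.sum_add_sum_compl D]
  obtain ⟨e, he⟩ := Nat.exists_eq_add_of_le hVW
  rw [he] at hcard
  rw [he, Nat.add_sub_cancel_left]
  rcases le_total e D.card with h | h <;> nlinarith

end

section

variable {V U : Type*} [AddGroup V]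

def translateDarts (K T : Finset V) : Set (completeBipartiteGraph V (V ⊕ U)).Dart :=
  {d | match d.fst, d.snd with
    | inl x, inr (inl y) => x + y ∈ K
    | inr (inl y), inl x => x + y ∈ K
    | inr (inr _), inl x => x ∈ T
    | _, _ => False}

variable (K T : Finset V)

theorem tailCount_translateDarts_inl (x : V) :
    tailCount (translateDarts (U := U) K T) (inl x) = K.card := by
  have h : {w | dartInl x w ∈ translateDarts (U := U) K T} = inl '' ((x + ·) ⁻¹' K) := by
    ext (w | u) <;> simp [translateDarts, dartInl]
  rw [tailCount_inl, h, Set.ncard_image_of_injective _ inl_injective,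
    Set.ncard_preimage_of_injective_subset_range (add_right_injective x)
      (fun z _ => ⟨-x + z, add_neg_cancel_left x z⟩), Set.ncard_coe_finset]

theorem tailCount_translateDarts_inr_inl (y : V) :
    tailCount (translateDarts (U := U) K T) (inr (inl y)) = K.card := by
  rw [tailCount_inr]
  change ((· + y) ⁻¹' (K : Set V)).ncard = K.card
  rw [Set.ncard_preimage_of_injective_subset_range (add_left_injective y)
      (fun z _ => ⟨z + -y, neg_add_cancel_right z y⟩), Set.ncard_coe_finset]

theorem tailCount_translateDarts_inr_inr (u : U) :
    tailCount (translateDarts (U := U) K T) (inr (inr u)) = T.card := by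
  rw [tailCount_inr, ← Set.ncard_coe_finset T]
  rfl

variable [Fintype V] [Fintype U]

theorem ncard_translateDarts :
    (translateDarts (U := U) K T).ncard
      = 2 * Fintype.card V * K.card + Fintype.card U * T.card := by
  simp only [ncard_eq_sum_tailCount, Fintype.sum_sum_type, tailCount_translateDarts_inl,
    tailCount_translateDarts_inr_inl, tailCount_translateDarts_inr_inr, Finset.sum_const,
    Finset.card_univ, smul_eq_mul]
  ring

theorem isKTDS_translateDarts {k : ℕ} (hK : k ≤ K.card) (hT : k + 1 ≤ T.card) :
    IsKTDS (inflation (completeBipartiteGraph V (V ⊕ U))) k (translateDarts K T) := by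
  have hcount : ∀ v, k ≤ tailCount (translateDarts (U := U) K T) v := by
    rintro (x | y | u)
    · rw [tailCount_translateDarts_inl]; exact hK
    · rw [tailCount_translateDarts_inr_inl]; exact hK
    · rw [tailCount_translateDarts_inr_inr]; omega
  refine isKTDS_inflation_of_le_tailCount (fun d => hcount d.fst) fun d hd hd' => ?_
  -- the only unmatched darts of `translateDarts K T` leave the vertices `inr (inr u)`
  rcases d with ⟨⟨x | y | u, x' | y' | u'⟩, _⟩
  all_goals first
    | exact absurd hd hd'
    | exact hd.elim
    | exact hT.trans (tailCount_translateDarts_inr_inr K T _).ge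

end

end SimpleGraph.completeBipartiteGraph

/-- **Proposition (`K_{p,q}`).** For `q ≥ p > k ≥ 2`,
`γ_{×k,t}((K_{p,q})_I) = 2pk + (q - p)(k + 1)`. -/
theorem stmt17 (p q k : ℕ) (hk : 2 ≤ k) (hkp : k < p) (hpq : p ≤ q) :
    ktdn (inflation (completeBipartiteGraph (Fin p) (Fin q))) k
      = 2 * p * k + (q - p) * (k + 1) := by
  have : NeZero p := ⟨by omega⟩
  have : Nonempty (Fin q) := ⟨⟨0, by omega⟩⟩
  have hcard_univ : (Finset.univ : Finset (Fin p)).card = p := Finset.card_fin p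
  obtain ⟨K, -, hK⟩ := Finset.univ.exists_subset_card_eq (n := k) (hcard_univ ▸ hkp.le)
  obtain ⟨T, -, hT⟩ := Finset.univ.exists_subset_card_eq (n := k + 1) (hcard_univ ▸ hkp)
  let e : completeBipartiteGraph (Fin p) (Fin p ⊕ Fin (q - p)) ≃g
      completeBipartiteGraph (Fin p) (Fin q) :=
    completeBipartiteGraphCongr (.refl _) (finSumFinEquiv.trans (finCongr (by omega)))
  have hS := (completeBipartiteGraph.isKTDS_translateDarts K T hK.ge hT.ge).image_iso e.inflation
  have hcard : (e.inflation '' completeBipartiteGraph.translateDarts K T).ncard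
      = 2 * p * k + (q - p) * (k + 1) := by
    rw [Set.ncard_image_of_injective _ e.inflation.injective,
      completeBipartiteGraph.ncard_translateDarts, hK, hT]
    simp
  rw [← hcard]
  refine ktdn_eq_ncard hS fun S hS' => hcard ▸ ?_
  simpa using completeBipartiteGraph.le_ncard_of_isKTDS_inflation hk (by simpa using hpq) hS'
end

section
/- Let G be the complete multipartite graph K_{n_1,n_2,...,n_m}, let n = n_1 + n_2 + ... + n_m, and let n' = max{ Σ_{i∈J} n_i : J ⊆ {1,2,...,m} and Σ_{i∈J} n_i ≤ n/2 }. Then for every integer k with 2 ≤ k < n', γ_{×k,t}(G_I) ≤ n(k+1) − 2n'. -/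
open SimpleGraph

/-!
Choose `J` with `n' = ∑_{i ∈ J} n_i ≤ n/2`. The `n'` vertices in the parts of `J` and any `n'`
vertices outside them span a `K_{n',n'}`, which contains a `k`-regular bipartite circulant `H`.
A dart `d` of `G` out of `x` is adjacent in `G_I` to every other dart out of `x` and to its
reverse. Hence choosing `k + 1` darts out of each vertex suffices, and so do `k` darts whenever
the chosen darts are closed under reversal, as for the darts of `H`. Every vertex has degree
`n - n_i ≥ n' > k`, so this gives a `k`-tuple total dominating set of size
`2n'k + (n - 2n')(k + 1) = n(k + 1) - 2n'`.
-/

namespace SimpleGraph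

variable {V : Type*} {G : SimpleGraph V}

theorem inflation_adj_iff {d₁ d₂ : G.Dart} :
    (inflation G).Adj d₁ d₂ ↔ d₁ ≠ d₂ ∧ (d₁.fst = d₂.fst ∨ d₂ = d₁.symm) := by
  have hswap : ∀ d d' : G.Dart, d.toProd = d'.toProd.swap ↔ d' = d.symm := fun d d' => by
    rw [Dart.ext_iff, Dart.symm_toProd, ← Prod.swap_inj, Prod.swap_swap, eq_comm]
  simp only [inflation, fromRel_adj, hswap, eq_comm (a := d₂.toProd.1)]
  constructor
  · rintro ⟨hne, (h | h) | (h | rfl)⟩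
    · exact ⟨hne, .inl h⟩
    · exact ⟨hne, .inr h⟩
    · exact ⟨hne, .inl h⟩
    · exact ⟨hne, .inr (Dart.symm_symm _).symm⟩
  · rintro ⟨hne, h | h⟩
    · exact ⟨hne, .inl (.inl h)⟩
    · exact ⟨hne, .inl (.inr h)⟩

theorem ncard_setOf_dart_fst_eq_snd_mem {x : V} {N : Set V} (hN : N ⊆ G.neighborSet x) :
    {d : G.Dart | d.fst = x ∧ d.snd ∈ N}.ncard = N.ncard := by
  have hinj : Set.InjOn (fun d : G.Dart => d.snd) {d : G.Dart | d.fst = x ∧ d.snd ∈ N} :=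
    fun d hd d' hd' h => Dart.ext _ _ (Prod.ext (hd.1.trans hd'.1.symm) h)
  rw [← hinj.ncard_image]
  congr 1
  ext y
  refine ⟨?_, fun hy => ⟨⟨(x, y), hN hy⟩, ⟨rfl, hy⟩, rfl⟩⟩
  rintro ⟨d, ⟨-, hd⟩, rfl⟩
  exact hd

theorem isKTDS_inflation_of_forall [Finite V] {k : ℕ} (N : V → Set V)
    (hN : ∀ x, N x ⊆ G.neighborSet x)
    (hk : ∀ x, k + 1 ≤ (N x).ncard ∨ (k ≤ (N x).ncard ∧ ∀ y ∈ N x, x ∈ N y)) :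
    IsKTDS (inflation G) k {d | d.snd ∈ N d.fst} := by
  have : Finite G.Dart := .of_injective _ Dart.toProd_injective
  intro d
  set F := {d' : G.Dart | d'.fst = d.fst ∧ d'.snd ∈ N d.fst}
  have hF : F.ncard = (N d.fst).ncard := ncard_setOf_dart_fst_eq_snd_mem (hN d.fst)
  have hF_sub : F \ {d} ⊆ {d | d.snd ∈ N d.fst} ∩ (inflation G).neighborSet d := by
    rintro d' ⟨⟨hfst, hsnd⟩, hne⟩
    refine ⟨by simpa [hfst] using hsnd, inflation_adj_iff.2 ⟨Ne.symm hne, .inl hfst.symm⟩⟩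
  rcases hk d.fst with hbig | ⟨hsmall, hclosed⟩
  · calc k ≤ F.ncard - 1 := by omega
      _ ≤ (F \ {d}).ncard := Set.pred_ncard_le_ncard_sdiff_singleton F d
      _ ≤ _ := Set.ncard_le_ncard hF_sub
  by_cases hd : d ∈ F
  · -- the reverse dart `d.symm` replaces `d` among the neighbours of `d`
    have hsymm : d.symm ∉ F \ {d} := fun h => d.snd_ne_fst h.1.1
    calc k ≤ F.ncard := hF ▸ hsmall
      _ = (insert d.symm (F \ {d})).ncard := by
        rw [Set.ncard_insert_of_notMem hsymm, Set.ncard_sdiff_singleton_add_one hd]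
      _ ≤ _ := by
        refine Set.ncard_le_ncard (Set.insert_subset ⟨?_, ?_⟩ hF_sub)
        · exact hclosed d.snd hd.2
        · exact inflation_adj_iff.2 ⟨(Dart.symm_ne d).symm, .inr rfl⟩
  · calc k ≤ F.ncard := hF ▸ hsmall
      _ = (F \ {d}).ncard := by rw [Set.sdiff_singleton_eq_self hd]
      _ ≤ _ := Set.ncard_le_ncard hF_sub

theorem ncard_setOf_dart_snd_mem [Fintype V] (N : V → Set V)
    (hN : ∀ x, N x ⊆ G.neighborSet x) :
    {d : G.Dart | d.snd ∈ N d.fst}.ncard = ∑ x, (N x).ncard := by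
  let e : {d : G.Dart | d.snd ∈ N d.fst} ≃ Σ x, N x :=
    { toFun := fun d => ⟨d.1.fst, d.1.snd, d.2⟩
      invFun := fun p => ⟨⟨(p.1, p.2), hN p.1 p.2.2⟩, p.2.2⟩ }
  rw [← Nat.card_coe_set_eq, Nat.card_congr e, Nat.card_sigma]
  simp only [Nat.card_coe_set_eq]

theorem ktdn_le_ncard {W : Type*} {H : SimpleGraph W} {k : ℕ} {S : Set W} (hS : IsKTDS H k S) :
    ktdn H k ≤ S.ncard :=
  Nat.sInf_le ⟨S, hS, rfl⟩

theorem ktdn_inflation_add_card_le [Fintype V] {k : ℕ} {H : SimpleGraph V} (hHG : H ≤ G)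
    (U : Finset V) (hU : ∀ x ∈ U, (H.neighborSet x).ncard = k)
    (hUc : ∀ x ∉ U, H.neighborSet x = ∅ ∧ k < (G.neighborSet x).ncard) :
    ktdn (inflation G) k + U.card ≤ Fintype.card V * (k + 1) := by
  classical
  have hN : ∀ x, ∃ N ⊆ G.neighborSet x,
      (x ∈ U → N = H.neighborSet x) ∧ (x ∉ U → N.ncard = k + 1) := fun x => by
    by_cases hx : x ∈ U
    · exact ⟨H.neighborSet x, fun y hy => hHG hy, fun _ => rfl, (absurd hx ·)⟩
    · obtain ⟨N, hNG, hNcard⟩ := Set.exists_subset_card_eq (hUc x hx).2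
      exact ⟨N, hNG, (absurd · hx), fun _ => hNcard⟩
  choose N hNG hNU hNUc using hN
  have hktds : IsKTDS (inflation G) k {d | d.snd ∈ N d.fst} := by
    refine isKTDS_inflation_of_forall N hNG fun x => ?_
    by_cases hx : x ∈ U
    · refine .inr ⟨(hNU x hx ▸ hU x hx).ge, fun y hy => ?_⟩
      rw [hNU x hx] at hy
      have hyU : y ∈ U := by
        by_contra hyU
        exact (hUc y hyU).1.subset (H.adj_symm hy)
      rw [hNU y hyU]
      exact H.adj_symm hy
    · exact .inl (hNUc x hx).ge
  have hcount : ∀ x, (N x).ncard + (if x ∈ U then 1 else 0) = k + 1 := fun x => by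
    by_cases hx : x ∈ U
    · simp [hx, hNU x hx, hU x hx]
    · simp [hx, hNUc x hx]
  calc ktdn (inflation G) k + U.card
      ≤ {d : G.Dart | d.snd ∈ N d.fst}.ncard + U.card :=
        Nat.add_le_add_right (ktdn_le_ncard hktds) U.card
    _ = ∑ x, ((N x).ncard + if x ∈ U then 1 else 0) := by
        rw [ncard_setOf_dart_snd_mem N hNG, Finset.sum_add_distrib, Finset.sum_boole]
        simp
    _ = Fintype.card V * (k + 1) := by simp [hcount]

def bipartiteCirculant (p k : ℕ) : SimpleGraph (Fin p ⊕ Fin p) where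
  Adj
    | .inl i, .inr j | .inr j, .inl i => ((j - i : Fin p) : ℕ) < k
    | _, _ => False
  symm := ⟨by rintro (i | i) (j | j) h <;> exact h⟩
  loopless := ⟨by rintro (i | i) h <;> exact h⟩

theorem ncard_setOf_val_lt_of_bijective {p k : ℕ} (hkp : k ≤ p) {f : Fin p → Fin p}
    (hf : Function.Bijective f) : {x | (f x : ℕ) < k}.ncard = k := by
  change (f ⁻¹' (Fin.val ⁻¹' Set.Iio k)).ncard = k
  rw [Set.ncard_preimage_of_injective_subset_range hf.1 (by simp [hf.2.range_eq]),
    Set.ncard_preimage_of_injective_subset_range (s := Set.Iio k) Fin.val_injective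
      (fun x hx => ⟨⟨x, lt_of_lt_of_le hx hkp⟩, rfl⟩), Set.ncard_Iio_nat]

theorem ncard_neighborSet_bipartiteCirculant {p k : ℕ} [NeZero p] (hkp : k ≤ p)
    (v : Fin p ⊕ Fin p) : ((bipartiteCirculant p k).neighborSet v).ncard = k := by
  rcases v with i | j
  · have : (bipartiteCirculant p k).neighborSet (.inl i) =
        .inr '' {j | ((j - i : Fin p) : ℕ) < k} := by
      ext (j | j) <;> simp [bipartiteCirculant]
    rw [this, Set.ncard_image_of_injective _ Sum.inr_injective]
    exact ncard_setOf_val_lt_of_bijective hkp (Equiv.subRight i).bijective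
  · have : (bipartiteCirculant p k).neighborSet (.inr j) =
        .inl '' {i | ((j - i : Fin p) : ℕ) < k} := by
      ext (i | i) <;> simp [bipartiteCirculant]
    rw [this, Set.ncard_image_of_injective _ Sum.inl_injective]
    exact ncard_setOf_val_lt_of_bijective hkp (Equiv.subLeft j).bijective

theorem exists_injective_fin_mem_of_le_ncard [Finite V] {p : ℕ} {A : Set V}
    (hA : p ≤ A.ncard) : ∃ f : Fin p → V, Function.Injective f ∧ ∀ i, f i ∈ A := by
  have : Fintype A := .ofFinite A
  obtain ⟨f⟩ := Function.Embedding.nonempty_of_card_le (α := Fin p) (β := A)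
    (by rwa [Fintype.card_fin, ← Nat.card_eq_fintype_card, Nat.card_coe_set_eq])
  exact ⟨fun i => f i, Subtype.val_injective.comp f.injective, fun i => (f i).2⟩

theorem ktdn_inflation_add_two_mul_le [Fintype V] {k p : ℕ} [NeZero p] (hkp : k ≤ p)
    (hdeg : ∀ x, k < (G.neighborSet x).ncard) {A B : Set V} (hA : p ≤ A.ncard)
    (hB : p ≤ B.ncard) (hAB : ∀ x ∈ A, ∀ y ∈ B, G.Adj x y) :
    ktdn (inflation G) k + 2 * p ≤ Fintype.card V * (k + 1) := by
  classical
  obtain ⟨a, ha, haA⟩ := exists_injective_fin_mem_of_le_ncard hA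
  obtain ⟨b, hb, hbB⟩ := exists_injective_fin_mem_of_le_ncard hB
  have he : ∀ i j, G.Adj (a i) (b j) := fun i j => hAB _ (haA i) _ (hbB j)
  let e : Fin p ⊕ Fin p ↪ V := ⟨Sum.elim a b, ha.sumElim hb fun i j => (he i j).ne⟩
  have hHG : (bipartiteCirculant p k).map e ≤ G := by
    rintro _ _ ⟨-, (i | j), (i' | j'), hadj, rfl, rfl⟩
    · exact hadj.elim
    · exact he i j'
    · exact (he i' j).symm
    · exact hadj.elim
  have hU : ∀ x ∈ Finset.univ.map e,
      (((bipartiteCirculant p k).map e).neighborSet x).ncard = k := by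
    intro x hx
    obtain ⟨v, -, rfl⟩ := Finset.mem_map.1 hx
    rw [neighborSet_map, Set.ncard_image_of_injective _ e.injective,
      ncard_neighborSet_bipartiteCirculant hkp]
  have hUc : ∀ x ∉ Finset.univ.map e, ((bipartiteCirculant p k).map e).neighborSet x = ∅ := by
    intro x hx
    refine Set.eq_empty_of_forall_notMem ?_
    rintro y ⟨-, u, v, -, hu, -⟩
    exact hx (Finset.mem_map.2 ⟨u, Finset.mem_univ _, hu⟩)
  have := ktdn_inflation_add_card_le hHG _ hU fun x hx => ⟨hUc x hx, hdeg x⟩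
  simpa [two_mul] using this

theorem ncard_setOf_fst_mem {ι : Type*} {V : ι → Type*} [∀ i, Fintype (V i)] (s : Finset ι) :
    {x : Σ i, V i | x.1 ∈ s}.ncard = ∑ i ∈ s, Fintype.card (V i) := by
  classical
  have : {x : Σ i, V i | x.1 ∈ s} = ↑(s.sigma fun i => (Finset.univ : Finset (V i))) := by
    ext; simp
  rw [this, Set.ncard_coe_finset, Finset.card_sigma]
  simp

theorem ncard_neighborSet_completeMultipartiteGraph {ι : Type*} [Fintype ι] [DecidableEq ι]
    {V : ι → Type*} [∀ i, Fintype (V i)] (x : Σ i, V i) :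
    ((completeMultipartiteGraph V).neighborSet x).ncard = ∑ i ∈ {x.1}ᶜ, Fintype.card (V i) := by
  rw [← ncard_setOf_fst_mem]
  congr 1
  ext y
  simp [eq_comm]

end SimpleGraph

theorem Finset.sum_add_le_sum_of_two_mul_le {ι : Type*} [Fintype ι] [DecidableEq ι] {f : ι → ℕ}
    {J : Finset ι} (hJ : 2 * ∑ i ∈ J, f i ≤ ∑ i, f i) (i : ι) :
    ∑ j ∈ J, f j + f i ≤ ∑ j, f j := by
  by_cases hi : i ∈ J
  · have := Finset.single_le_sum (fun j _ => Nat.zero_le (f j)) hi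
    omega
  · rw [add_comm, ← Finset.sum_insert hi]
    exact Finset.sum_le_sum_of_subset (Finset.subset_univ _)

theorem stmt19_general (m : ℕ) (ns : Fin m → ℕ) (n' k : ℕ)
    (hn' : IsGreatest
      {s : ℕ | ∃ J : Finset (Fin m), s = ∑ i ∈ J, ns i ∧ 2 * s ≤ ∑ i, ns i} n')
    (hk : k < n') :
    ktdn (inflation (completeMultipartiteGraph fun i : Fin m => Fin (ns i))) k
      ≤ (∑ i, ns i) * (k + 1) - 2 * n' := by
  obtain ⟨⟨J, hJn', hJ⟩, -⟩ := hn'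
  have : NeZero n' := ⟨by omega⟩
  have hJc := Finset.sum_add_sum_compl J ns
  have hdeg (x : Σ i, Fin (ns i)) :
      k < ((completeMultipartiteGraph fun i => Fin (ns i)).neighborSet x).ncard := by
    have hx := Finset.sum_add_sum_compl {x.1} ns
    have := Finset.sum_add_le_sum_of_two_mul_le (hJn' ▸ hJ) x.1
    rw [ncard_neighborSet_completeMultipartiteGraph]
    simp only [Fintype.card_fin, Finset.sum_singleton] at hx ⊢
    omega
  have hA : n' ≤ {x : Σ i, Fin (ns i) | x.1 ∈ J}.ncard := by
    simp [ncard_setOf_fst_mem, hJn']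
  have hB : n' ≤ {x : Σ i, Fin (ns i) | x.1 ∈ Jᶜ}.ncard := by
    simp only [ncard_setOf_fst_mem, Fintype.card_fin]
    omega
  have hAB : ∀ x ∈ {x : Σ i, Fin (ns i) | x.1 ∈ J}, ∀ y ∈ {x : Σ i, Fin (ns i) | x.1 ∈ Jᶜ},
      (completeMultipartiteGraph fun i => Fin (ns i)).Adj x y := by
    rintro x hx y hy (hxy : x.1 = y.1)
    exact Finset.mem_compl.1 hy (hxy ▸ hx)
  have := ktdn_inflation_add_two_mul_le hk.le hdeg hA hB hAB
  simp only [Fintype.card_sigma, Fintype.card_fin] at this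
  omega

/-- **Proposition (complete multipartite graphs).** Let `G = K_{n_1,…,n_m}`,
`n = n_1 + ⋯ + n_m` and `n' = max { Σ_{i ∈ J} n_i : J ⊆ {1,…,m}, Σ_{i ∈ J} n_i ≤ n/2 }`.
Then for every `2 ≤ k < n'`, `γ_{×k,t}(G_I) ≤ n(k+1) - 2n'`. -/
theorem stmt19 (m : ℕ) (ns : Fin m → ℕ) (n' k : ℕ)
    (hn' : IsGreatest
      {s : ℕ | ∃ J : Finset (Fin m), s = ∑ i ∈ J, ns i ∧ 2 * s ≤ ∑ i, ns i} n')
    (hk2 : 2 ≤ k) (hk : k < n') :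
    ktdn (inflation (completeMultipartiteGraph fun i : Fin m => Fin (ns i))) k
      ≤ (∑ i, ns i) * (k + 1) - 2 * n' :=
  stmt19_general m ns n' k hn' hk
end
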